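/- arXiv:2102.10841 — 7 statements merged into one kernel-verified Lean document; each statement's English description precedes it below -/
import Mathlib

section
/- Let H be the Hermitian adjacency matrix of a mixed graph G with a pendant vertex v1 whose unique neighbor is v2, and let H' be the matrix obtained by deleting the rows and columns indexed by v1 and v2. Then p(H) = p(H') + 1, n(H) = n(H') + 1, and the nullity of H equals the nullity of H'. -/
open Complex in
/-- `M` is the Hermitian adjacency matrix of a mixed graph: Hermitian, zero diagonal,
entries in `{0, 1, i, -i}`. -/
def IsMixedAdj {n : Type*} [Fintype n] [DecidableEq n] (M : Matrix n n ℂ) : Prop :=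
  M.IsHermitian ∧ (∀ j, M j j = 0) ∧ ∀ j k, M j k ∈ ({0, 1, I, -I} : Set ℂ)

/-- The positive inertia index of a Hermitian matrix. -/
noncomputable def posIdx {n : Type*} [Fintype n] [DecidableEq n] {M : Matrix n n ℂ}
    (hM : M.IsHermitian) : ℕ :=
  Fintype.card {i // 0 < hM.eigenvalues i}

/-- The negative inertia index of a Hermitian matrix. -/
noncomputable def negIdx {n : Type*} [Fintype n] [DecidableEq n] {M : Matrix n n ℂ}
    (hM : M.IsHermitian) : ℕ :=
  Fintype.card {i // hM.eigenvalues i < 0}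

/-- The nullity of a Hermitian matrix: multiplicity of the eigenvalue `0`. -/
noncomputable def nulIdx {n : Type*} [Fintype n] [DecidableEq n] {M : Matrix n n ℂ}
    (hM : M.IsHermitian) : ℕ :=
  Fintype.card {i // hM.eigenvalues i = 0}

open Matrix Module Complex

namespace PendantAux

variable {n : Type*} [Fintype n] [DecidableEq n]

noncomputable def qf (M : Matrix n n ℂ) (x : n → ℂ) : ℝ := (star x ⬝ᵥ M *ᵥ x).re

lemma qf_def (M : Matrix n n ℂ) (x : n → ℂ) : qf M x = (star x ⬝ᵥ M *ᵥ x).re := rfl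

lemma mulVec_apply'' (M : Matrix n n ℂ) (v : n → ℂ) (j : n) :
    (M *ᵥ v) j = ∑ k, M j k * v k := rfl

lemma dotProduct_eq_sum (u v : n → ℂ) : u ⬝ᵥ v = ∑ j, u j * v j := rfl

lemma dotProduct_sum' (v : n → ℂ) (f : n → n → ℂ) :
    v ⬝ᵥ (∑ j, f j) = ∑ j, v ⬝ᵥ f j := by
  simp only [dotProduct, Finset.sum_apply, Finset.mul_sum]
  rw [Finset.sum_comm]

lemma sum_dotProduct' (v : n → ℂ) (f : n → n → ℂ) :
    (∑ j, f j) ⬝ᵥ v = ∑ j, f j ⬝ᵥ v := by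
  simp only [dotProduct, Finset.sum_apply, Finset.sum_mul]
  rw [Finset.sum_comm]

lemma spanlemma {M : Matrix n n ℂ} (hM : M.IsHermitian) (p : n → Prop) [DecidablePred p] :
    ∃ W : Submodule ℂ (n → ℂ), finrank ℂ W = Fintype.card {i // p i} ∧
      ∀ x ∈ W, ∃ c : n → ℝ, (∀ i, 0 ≤ c i) ∧ (∀ i, ¬ p i → c i = 0) ∧
        (x ≠ 0 → ∃ i, p i ∧ 0 < c i) ∧ qf M x = ∑ i, hM.eigenvalues i * c i := by
  classical
  set b := hM.eigenvectorBasis with hb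
  let e := WithLp.linearEquiv 2 ℂ (n → ℂ)
  let β : Basis n ℂ (n → ℂ) := b.toBasis.map e
  have hβ : ∀ i, β i = (WithLp.equiv 2 _) (b i) := fun i => by
    simp [β, e, Basis.map_apply]
  have horth : ∀ i j, star (β i) ⬝ᵥ β j = if i = j then (1:ℂ) else 0 := by
    intro i j
    have h0 := b.orthonormal
    rw [orthonormal_iff_ite] at h0
    have h2 := h0 i j
    rw [EuclideanSpace.inner_eq_star_dotProduct, dotProduct_comm] at h2
    simpa [hβ] using h2
  have hmul : ∀ j, M *ᵥ β j = (hM.eigenvalues j : ℝ) • β j := by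
    intro j; rw [hβ]
    simpa using hM.mulVec_eigenvectorBasis j
  have hqf : ∀ x : n → ℂ, qf M x = ∑ i, hM.eigenvalues i * Complex.normSq (β.repr x i) := by
    intro x
    set r := β.repr x with hr
    have hx : x = ∑ i, r i • β i := (Basis.sum_repr β x).symm
    have h1 : M *ᵥ x = ∑ j, r j • ((hM.eigenvalues j : ℝ) • β j) := by
      conv_lhs => rw [hx]
      simp only [← Matrix.mulVecLin_apply, map_sum, LinearMap.map_smul]
      simp only [Matrix.mulVecLin_apply, hmul]
    have h2 : star x ⬝ᵥ M *ᵥ x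
        = ∑ i, (starRingEnd ℂ) (r i) * r i * (hM.eigenvalues i : ℂ) := by
      rw [h1]
      conv_lhs => rw [hx]
      rw [star_sum, sum_dotProduct']
      congr 1; funext i
      rw [dotProduct_sum']
      simp only [star_smul, smul_dotProduct, dotProduct_smul, horth]
      simp only [smul_ite, smul_zero, Finset.sum_ite_eq, Finset.mem_univ, if_true]
      simp only [smul_eq_mul, Complex.real_smul, starRingEnd_apply, mul_one, Pi.smul_apply]
      ring
    unfold qf
    rw [h2, Complex.re_sum]
    congr 1; funext i
    rw [← Complex.normSq_eq_conj_mul_self, ← Complex.ofReal_mul, Complex.ofReal_re]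
    ring
  refine ⟨Submodule.span ℂ (β '' {i | p i}), ?_, ?_⟩
  · rw [Set.image_eq_range]
    have hli : LinearIndependent ℂ (fun i : {i | p i} => β (i : n)) :=
      β.linearIndependent.comp _ Subtype.val_injective
    rw [finrank_span_eq_card hli]
    exact Fintype.card_congr (Equiv.refl _)
  · intro x hx
    refine ⟨fun i => Complex.normSq (β.repr x i), fun i => Complex.normSq_nonneg _, ?_, ?_, (hqf x)⟩
    · intro i hi
      have hsupp := (Basis.mem_span_image β).mp hx
      have : i ∉ (β.repr x).support := fun h => hi (hsupp h)
      rw [Finsupp.notMem_support_iff] at this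
      simp [this]
    · intro hx0
      have : β.repr x ≠ 0 := fun h => hx0 (by
        have := congrArg (β.repr.symm) h; simpa using this)
      obtain ⟨i, hi⟩ := Finsupp.ne_iff.mp this
      have hpi : p i := by
        by_contra hpi
        have hsupp := (Basis.mem_span_image β).mp hx
        have : i ∉ (β.repr x).support := fun h => hpi (hsupp h)
        rw [Finsupp.notMem_support_iff] at this
        simp [this] at hi
      exact ⟨i, hpi, by simpa [Complex.normSq_pos] using hi⟩


section Inertia

variable {n : Type*} [Fintype n] [DecidableEq n]

lemma dim_bound {f : (n → ℂ) → ℝ} {W W' : Submodule ℂ (n → ℂ)}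
    (hW : ∀ x ∈ W, x ≠ 0 → 0 < f x) (hW' : ∀ x ∈ W', f x ≤ 0) :
    finrank ℂ W + finrank ℂ W' ≤ Fintype.card n := by
  have hdisj : W ⊓ W' = ⊥ := by
    rw [Submodule.eq_bot_iff]
    rintro x ⟨h1, h2⟩
    by_contra hx
    exact absurd (hW' x h2) (not_le.mpr (hW x h1 hx))
  have := Submodule.finrank_sup_add_finrank_inf_eq W W'
  rw [hdisj, finrank_bot, add_zero] at this
  rw [← this]
  calc finrank ℂ ↥(W ⊔ W') ≤ finrank ℂ (n → ℂ) := Submodule.finrank_le _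
    _ = Fintype.card n := Module.finrank_pi ℂ

lemma card_split (p : n → Prop) [DecidablePred p] :
    Fintype.card {i // p i} + Fintype.card {i // ¬ p i} = Fintype.card n := by
  rw [Fintype.card_subtype_compl]
  have := Fintype.card_subtype_le p
  omega

lemma exists_pos {M : Matrix n n ℂ} (hM : M.IsHermitian) :
    ∃ W : Submodule ℂ (n → ℂ), finrank ℂ W = posIdx hM ∧
      ∀ x ∈ W, x ≠ 0 → 0 < qf M x := by
  obtain ⟨W, h1, h2⟩ := spanlemma hM (fun i => 0 < hM.eigenvalues i)
  refine ⟨W, h1.trans (Fintype.card_congr (Equiv.refl _)), fun x hx hx0 => ?_⟩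
  obtain ⟨c, hc0, hcz, hcp, hq⟩ := h2 x hx
  rw [hq]
  refine Finset.sum_pos' (fun i _ => ?_) ?_
  · by_cases hi : 0 < hM.eigenvalues i
    · exact mul_nonneg hi.le (hc0 i)
    · simp [hcz i hi]
  · obtain ⟨i, hpi, hci⟩ := hcp hx0
    exact ⟨i, Finset.mem_univ i, mul_pos hpi hci⟩

lemma exists_nonpos {M : Matrix n n ℂ} (hM : M.IsHermitian) :
    ∃ W : Submodule ℂ (n → ℂ), finrank ℂ W + posIdx hM = Fintype.card n ∧
      ∀ x ∈ W, qf M x ≤ 0 := by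
  obtain ⟨W, h1, h2⟩ := spanlemma hM (fun i => ¬ 0 < hM.eigenvalues i)
  refine ⟨W, ?_, fun x hx => ?_⟩
  · rw [h1, add_comm]
    exact (card_split (fun i => 0 < hM.eigenvalues i))
  · obtain ⟨c, hc0, hcz, _, hq⟩ := h2 x hx
    rw [hq]
    refine Finset.sum_nonpos (fun i _ => ?_)
    by_cases hi : 0 < hM.eigenvalues i
    · simp [hcz i (by simpa using hi)]
    · exact mul_nonpos_of_nonpos_of_nonneg (not_lt.mp hi) (hc0 i)

lemma exists_neg {M : Matrix n n ℂ} (hM : M.IsHermitian) :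
    ∃ W : Submodule ℂ (n → ℂ), finrank ℂ W = negIdx hM ∧
      ∀ x ∈ W, x ≠ 0 → qf M x < 0 := by
  obtain ⟨W, h1, h2⟩ := spanlemma hM (fun i => hM.eigenvalues i < 0)
  refine ⟨W, h1.trans (Fintype.card_congr (Equiv.refl _)), fun x hx hx0 => ?_⟩
  obtain ⟨c, hc0, hcz, hcp, hq⟩ := h2 x hx
  rw [hq]
  have : ∀ i ∈ Finset.univ, hM.eigenvalues i * c i ≤ 0 := by
    intro i _
    by_cases hi : hM.eigenvalues i < 0
    · exact mul_nonpos_of_nonpos_of_nonneg hi.le (hc0 i)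
    · simp [hcz i hi]
  obtain ⟨i, hpi, hci⟩ := hcp hx0
  have hpos : 0 < ∑ j, -(hM.eigenvalues j * c j) :=
    Finset.sum_pos' (fun j _ => neg_nonneg.mpr (this j (Finset.mem_univ j)))
      ⟨i, Finset.mem_univ i, by exact neg_pos.mpr (mul_neg_of_neg_of_pos hpi hci)⟩
  rw [Finset.sum_neg_distrib] at hpos
  linarith

lemma exists_nonneg {M : Matrix n n ℂ} (hM : M.IsHermitian) :
    ∃ W : Submodule ℂ (n → ℂ), finrank ℂ W + negIdx hM = Fintype.card n ∧
      ∀ x ∈ W, 0 ≤ qf M x := by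
  obtain ⟨W, h1, h2⟩ := spanlemma hM (fun i => ¬ hM.eigenvalues i < 0)
  refine ⟨W, ?_, fun x hx => ?_⟩
  · rw [h1, add_comm]
    exact (card_split (fun i => hM.eigenvalues i < 0))
  · obtain ⟨c, hc0, hcz, _, hq⟩ := h2 x hx
    rw [hq]
    refine Finset.sum_nonneg (fun i _ => ?_)
    by_cases hi : hM.eigenvalues i < 0
    · simp [hcz i (by simpa using hi)]
    · exact mul_nonneg (not_lt.mp hi) (hc0 i)

lemma posIdx_eq_of {M : Matrix n n ℂ} (hM : M.IsHermitian) {W W' : Submodule ℂ (n → ℂ)}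
    (hW : ∀ x ∈ W, x ≠ 0 → 0 < qf M x) (hW' : ∀ x ∈ W', qf M x ≤ 0)
    (hsum : finrank ℂ W + finrank ℂ W' = Fintype.card n) :
    posIdx hM = finrank ℂ W := by
  obtain ⟨Wp, hWp1, hWp2⟩ := exists_pos hM
  obtain ⟨Wn, hWn1, hWn2⟩ := exists_nonpos hM
  have h1 := dim_bound hW hWn2
  have h2 := dim_bound hWp2 hW'
  omega

lemma negIdx_eq_of {M : Matrix n n ℂ} (hM : M.IsHermitian) {W W' : Submodule ℂ (n → ℂ)}
    (hW : ∀ x ∈ W, x ≠ 0 → qf M x < 0) (hW' : ∀ x ∈ W', 0 ≤ qf M x)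
    (hsum : finrank ℂ W + finrank ℂ W' = Fintype.card n) :
    negIdx hM = finrank ℂ W := by
  obtain ⟨Wp, hWp1, hWp2⟩ := exists_neg hM
  obtain ⟨Wn, hWn1, hWn2⟩ := exists_nonneg hM
  have h1 : finrank ℂ W + finrank ℂ Wn ≤ Fintype.card n :=
    dim_bound (f := fun x => - qf M x) (fun x hx hx0 => by simpa using hW x hx hx0)
      (fun x hx => by simpa using hWn2 x hx)
  have h2 : finrank ℂ Wp + finrank ℂ W' ≤ Fintype.card n :=
    dim_bound (f := fun x => - qf M x) (fun x hx hx0 => by simpa using hWp2 x hx hx0)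
      (fun x hx => by simpa using hW' x hx)
  omega

lemma tri {M : Matrix n n ℂ} (hM : M.IsHermitian) :
    posIdx hM + negIdx hM + nulIdx hM = Fintype.card n := by
  classical
  have e1 : posIdx hM + Fintype.card {i // ¬ 0 < hM.eigenvalues i} = Fintype.card n :=
    card_split _
  have e2 : negIdx hM + nulIdx hM = Fintype.card {i // ¬ 0 < hM.eigenvalues i} := by
    rw [negIdx, nulIdx, Fintype.card_subtype, Fintype.card_subtype, Fintype.card_subtype,
      ← Finset.card_union_of_disjoint (by
        simp only [Finset.disjoint_filter]
        intro i _ h1 h2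
        exact absurd h2 (ne_of_lt h1))]
    congr 1
    ext i
    simp only [Finset.mem_union, Finset.mem_filter, Finset.mem_univ, true_and, not_lt]
    exact le_iff_lt_or_eq.symm
  omega

end Inertia

end PendantAux

set_option maxHeartbeats 1600000 in
open Complex in
/-- Deleting a pendant vertex `v1` together with its unique neighbour `v2` from a mixed
graph decreases both the positive and the negative inertia index by exactly one and
preserves the nullity. -/
theorem pendant_vertex_inertia {n : Type*} [Fintype n] [DecidableEq n]
    (H : Matrix n n ℂ) (hmix : IsMixedAdj H) (hH : H.IsHermitian)
    (v1 v2 : n) (hne : v1 ≠ v2)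
    (hedge : H v1 v2 ∈ ({1, I, -I} : Set ℂ))
    (hpendant : ∀ j, j ≠ v2 → H v1 j = 0)
    (H' : Matrix {j : n // j ≠ v1 ∧ j ≠ v2} {j : n // j ≠ v1 ∧ j ≠ v2} ℂ)
    (hH'def : H' = H.submatrix (Subtype.val) (Subtype.val))
    (hH' : H'.IsHermitian) :
    posIdx hH = posIdx hH' + 1 ∧ negIdx hH = negIdx hH' + 1 ∧ nulIdx hH = nulIdx hH' := by
  classical
  open PendantAux in
  obtain ⟨-, hdiag, -⟩ := hmix
  set a := H v1 v2 with ha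
  have ha0 : a ≠ 0 := by
    simp only [Set.mem_insert_iff, Set.mem_singleton_iff, ← ha] at hedge
    rcases hedge with h | h | h <;> rw [h] <;> simp [Complex.I_ne_zero]
  have hsa0 : star a ≠ 0 := star_ne_zero.mpr ha0
  -- single star helper
  have hsstar : ∀ (i : n) (t : ℂ), star (Pi.single i t : n → ℂ) = Pi.single i (star t) := by
    intro i t; funext j
    simp only [Pi.star_apply, Pi.single_apply, apply_ite star, star_zero]
  -- row/column of v1
  have hHv1 : ∀ k, H v1 k = (Pi.single v2 a : n → ℂ) k := by
    intro k
    by_cases hk : k = v2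
    · subst hk; simp [Pi.single_eq_same, ha]
    · rw [hpendant k hk, Pi.single_eq_of_ne hk]
  have hHv1' : ∀ j, H j v1 = (Pi.single v2 (star a) : n → ℂ) j := by
    intro j
    rw [← hH.apply j v1, hHv1 j]
    by_cases hj : j = v2
    · subst hj; simp
    · simp [Pi.single_eq_of_ne hj]
  -- the correction vector
  set c : n → ℂ := fun k => if k = v1 ∨ k = v2 then 0 else -(H v2 k) / star a with hc
  have hcv1 : c v1 = 0 := by simp [hc]
  have hcv2 : c v2 = 0 := by simp [hc]
  have hck : ∀ k, k ≠ v1 → k ≠ v2 → c k = -(H v2 k) / star a := by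
    intro k h1 h2; simp [hc, h1, h2]
  have hstarc : ∀ j, j ≠ v1 → j ≠ v2 → star (c j) = -(H j v2) / a := by
    intro j h1 h2
    rw [hck j h1 h2, star_div₀, star_neg, hH.apply, star_star]
  -- the congruent block matrix
  set B : Matrix n n ℂ := Matrix.of fun j k =>
    H j k + star (c j) * (Pi.single v2 a : n → ℂ) k + (Pi.single v2 (star a) : n → ℂ) j * c k with hBdef
  have hBapp : ∀ j k, B j k =
      H j k + star (c j) * (Pi.single v2 a : n → ℂ) k + (Pi.single v2 (star a) : n → ℂ) j * c k := fun _ _ => rfl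
  have hBherm : B.IsHermitian := by
    rw [Matrix.IsHermitian]
    ext j k
    rw [Matrix.conjTranspose_apply, hBapp, hBapp]
    rw [star_add, star_add, star_mul', star_mul', star_star]
    have h1 : star ((Pi.single v2 a : n → ℂ) j) = (Pi.single v2 (star a) : n → ℂ) j := by
      rw [← Pi.star_apply, hsstar]
    have h2 : star ((Pi.single v2 (star a) : n → ℂ) k) = (Pi.single v2 a : n → ℂ) k := by
      rw [← Pi.star_apply, hsstar, star_star]
    rw [h1, h2, hH.apply]
    ring
  -- block facts
  have hBv1 : ∀ k, B v1 k = (Pi.single v2 a : n → ℂ) k := by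
    intro k
    rw [hBapp, hcv1, hHv1, Pi.single_eq_of_ne hne, star_zero]
    ring
  have hBv1' : ∀ j, B j v1 = (Pi.single v2 (star a) : n → ℂ) j := by
    intro j
    rw [hBapp, hcv1, hHv1', Pi.single_eq_of_ne hne]
    ring
  have hBv2' : ∀ j, j ≠ v1 → j ≠ v2 → B j v2 = 0 := by
    intro j h1 h2
    rw [hBapp, hcv2, hstarc j h1 h2, Pi.single_eq_same, Pi.single_eq_of_ne h2]
    rw [div_mul_cancel₀ _ ha0]
    ring
  have hBv2 : ∀ k, k ≠ v1 → k ≠ v2 → B v2 k = 0 := by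
    intro k h1 h2
    rw [hBapp, hcv2, hck k h1 h2, Pi.single_eq_same, Pi.single_eq_of_ne h2, star_zero]
    have h3 : star a * (-(H v2 k) / star a) = -(H v2 k) := by
      rw [mul_comm, div_mul_cancel₀ _ hsa0]
    rw [h3]
    ring
  have hBv2v2 : B v2 v2 = 0 := by
    rw [hBapp, hcv2, hdiag, Pi.single_eq_same]
    simp
  have hBblock : ∀ j k, j ≠ v1 → j ≠ v2 → k ≠ v1 → k ≠ v2 → B j k = H j k := by
    intro j k hj1 hj2 hk1 hk2
    rw [hBapp, Pi.single_eq_of_ne hk2, Pi.single_eq_of_ne hj2]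
    ring
  -- the linear change of variables
  set e1 : n → ℂ := Pi.single v1 1 with he1
  have hce1 : c ⬝ᵥ e1 = 0 := by
    rw [he1, dotProduct_single, hcv1, zero_mul]
  let L : (n → ℂ) →ₗ[ℂ] (n → ℂ) :=
    { toFun := fun x => x + (c ⬝ᵥ x) • e1
      map_add' := fun x y => by
        simp only [dotProduct_add, add_smul]; abel
      map_smul' := fun t x => by
        simp only [dotProduct_smul, smul_eq_mul, RingHom.id_apply, smul_add, smul_smul] }
  let L' : (n → ℂ) →ₗ[ℂ] (n → ℂ) :=
    { toFun := fun x => x - (c ⬝ᵥ x) • e1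
      map_add' := fun x y => by
        simp only [dotProduct_add, add_smul]; abel
      map_smul' := fun t x => by
        simp only [dotProduct_smul, smul_eq_mul, RingHom.id_apply, smul_sub, smul_smul] }
  have hLapp : ∀ x, L x = x + (c ⬝ᵥ x) • e1 := fun _ => rfl
  have hL'app : ∀ x, L' x = x - (c ⬝ᵥ x) • e1 := fun _ => rfl
  let φ : (n → ℂ) ≃ₗ[ℂ] (n → ℂ) := LinearEquiv.ofLinear L L'
    (by
      refine LinearMap.ext fun x => ?_
      simp only [LinearMap.coe_comp, Function.comp_apply, LinearMap.id_coe, id_eq]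
      rw [hLapp, hL'app, dotProduct_sub, dotProduct_smul, hce1, smul_zero,
        sub_zero, sub_add_cancel])
    (by
      refine LinearMap.ext fun x => ?_
      simp only [LinearMap.coe_comp, Function.comp_apply, LinearMap.id_coe, id_eq]
      rw [hL'app, hLapp, dotProduct_add, dotProduct_smul, hce1, smul_zero,
        add_zero, add_sub_cancel_right])
  have hφapp : ∀ x, φ x = x + (c ⬝ᵥ x) • e1 := fun _ => rfl
  -- vecMulVec decomposition of B
  have hvmv : ∀ (u v x : n → ℂ), Matrix.vecMulVec u v *ᵥ x = (v ⬝ᵥ x) • u := by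
    intro u v x; funext j
    simp only [Matrix.mulVec, Matrix.vecMulVec_apply, dotProduct, Pi.smul_apply,
      smul_eq_mul, Finset.mul_sum]
    rw [Finset.sum_mul]
    refine Finset.sum_congr rfl fun k _ => by ring
  have hBsum : B = H + Matrix.vecMulVec (star c) (Pi.single v2 a)
      + Matrix.vecMulVec (Pi.single v2 (star a)) c := by
    ext j k
    simp only [Matrix.add_apply, Matrix.vecMulVec_apply, Pi.star_apply]
    rw [hBapp]
  -- key congruence identity
  have hkey : ∀ x, star x ⬝ᵥ B *ᵥ x = star (φ x) ⬝ᵥ H *ᵥ (φ x) := by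
    intro x
    have hHe1 : H *ᵥ e1 = Pi.single v2 (star a) := by
      rw [he1, Matrix.mulVec_single]
      funext j
      simp only [Pi.smul_apply, Matrix.col_apply, op_smul_eq_mul]
      rw [mul_one, hHv1']
    have hHxv1 : (H *ᵥ x) v1 = a * x v2 := by
      show (fun k => H v1 k) ⬝ᵥ x = _
      rw [show (fun k => H v1 k) = Pi.single v2 a from funext hHv1, single_dotProduct]
    -- LHS
    have hstardp : star x ⬝ᵥ star c = star (c ⬝ᵥ x) := by
      simp only [dotProduct, star_sum, Pi.star_apply, star_mul']
      exact Finset.sum_congr rfl fun i _ => mul_comm _ _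
    have hlhs : star x ⬝ᵥ B *ᵥ x = star x ⬝ᵥ H *ᵥ x
        + (a * x v2) * star (c ⬝ᵥ x) + (c ⬝ᵥ x) * (star (x v2) * star a) := by
      rw [hBsum]
      simp only [Matrix.add_mulVec, hvmv, dotProduct_add, dotProduct_smul,
        single_dotProduct, dotProduct_single, smul_eq_mul, Pi.star_apply]
      try rw [hstardp]
      try ring
    -- RHS
    have hrhs : star (φ x) ⬝ᵥ H *ᵥ (φ x) = star x ⬝ᵥ H *ᵥ x
        + (a * x v2) * star (c ⬝ᵥ x) + (c ⬝ᵥ x) * (star (x v2) * star a) := by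
      rw [hφapp]
      have hHe1' : H *ᵥ (Pi.single v1 1 : n → ℂ) = Pi.single v2 (star a) := hHe1
      simp only [star_add, star_smul, Matrix.mulVec_add, Matrix.mulVec_smul,
        add_dotProduct, dotProduct_add, smul_dotProduct,
        dotProduct_smul, smul_eq_mul, he1, hHe1', hsstar, star_one,
        single_dotProduct, dotProduct_single, hHxv1,
        Pi.single_eq_of_ne hne, Pi.single_eq_of_ne (Ne.symm hne), Pi.single_eq_same,
        Pi.add_apply, Pi.smul_apply, Pi.star_apply]
      ring
    rw [hlhs, hrhs]
  have hqf_key : ∀ x, qf B x = qf H (φ x) := fun x => congrArg Complex.re (hkey x)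
  -- transfer of inertia from H to B
  have hpHB : posIdx hH = posIdx hBherm := by
    obtain ⟨WB, hWB1, hWB2⟩ := exists_pos hBherm
    obtain ⟨WB', hWB'1, hWB'2⟩ := exists_nonpos hBherm
    have h := posIdx_eq_of hH (W := WB.map (φ : (n → ℂ) →ₗ[ℂ] (n → ℂ)))
      (W' := WB'.map (φ : (n → ℂ) →ₗ[ℂ] (n → ℂ)))
      (by
        rintro x ⟨y, hy, rfl⟩ hx0
        have hy0 : y ≠ 0 := fun h => hx0 (by rw [h, map_zero])
        have := hWB2 y hy hy0
        rwa [hqf_key] at this)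
      (by
        rintro x ⟨y, hy, rfl⟩
        have := hWB'2 y hy
        rwa [hqf_key] at this)
      (by rw [LinearEquiv.finrank_map_eq, LinearEquiv.finrank_map_eq, hWB1]; omega)
    rw [h, LinearEquiv.finrank_map_eq, hWB1]
  have hnHB : negIdx hH = negIdx hBherm := by
    obtain ⟨WB, hWB1, hWB2⟩ := exists_neg hBherm
    obtain ⟨WB', hWB'1, hWB'2⟩ := exists_nonneg hBherm
    have h := negIdx_eq_of hH (W := WB.map (φ : (n → ℂ) →ₗ[ℂ] (n → ℂ)))
      (W' := WB'.map (φ : (n → ℂ) →ₗ[ℂ] (n → ℂ)))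
      (by
        rintro x ⟨y, hy, rfl⟩ hx0
        have hy0 : y ≠ 0 := fun h => hx0 (by rw [h, map_zero])
        have := hWB2 y hy hy0
        rwa [hqf_key] at this)
      (by
        rintro x ⟨y, hy, rfl⟩
        have := hWB'2 y hy
        rwa [hqf_key] at this)
      (by rw [LinearEquiv.finrank_map_eq, LinearEquiv.finrank_map_eq, hWB1]; omega)
    rw [h, LinearEquiv.finrank_map_eq, hWB1]
  -- the subtype
  have sum_sub : ∀ f : n → ℂ, f v1 = 0 → f v2 = 0 →
      ∑ j, f j = ∑ j : {j : n // j ≠ v1 ∧ j ≠ v2}, f j.val := by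
    intro f h1 h2
    rw [← Finset.sum_subtype (p := fun j => j ≠ v1 ∧ j ≠ v2)
      (Finset.univ.filter (fun j => j ≠ v1 ∧ j ≠ v2)) (by simp) f]
    rw [← Finset.sum_filter_add_sum_filter_not Finset.univ (fun j => j ≠ v1 ∧ j ≠ v2) f]
    have hz : ∑ j ∈ Finset.univ.filter (fun j => ¬(j ≠ v1 ∧ j ≠ v2)), f j = 0 :=
      Finset.sum_eq_zero (by
        intro j hj
        simp only [Finset.mem_filter, Finset.mem_univ, true_and, not_and_or, not_not] at hj
        rcases hj with rfl | rfl <;> assumption)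
    rw [hz, add_zero]
  -- the embedding ι
  let ι : ({j : n // j ≠ v1 ∧ j ≠ v2} → ℂ) →ₗ[ℂ] (n → ℂ) :=
    { toFun := fun w j => if h : j ≠ v1 ∧ j ≠ v2 then w ⟨j, h⟩ else 0
      map_add' := fun w w' => by
        funext j; by_cases h : j ≠ v1 ∧ j ≠ v2 <;> simp [h]
      map_smul' := fun t w => by
        funext j; by_cases h : j ≠ v1 ∧ j ≠ v2 <;> simp [h] }
  have hι1 : ∀ w, ι w v1 = 0 := fun w => by
    show (if h : v1 ≠ v1 ∧ v1 ≠ v2 then w ⟨v1, h⟩ else 0) = 0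
    simp
  have hι2 : ∀ w, ι w v2 = 0 := fun w => by
    show (if h : v2 ≠ v1 ∧ v2 ≠ v2 then w ⟨v2, h⟩ else 0) = 0
    simp
  have hι3 : ∀ w (j : {j : n // j ≠ v1 ∧ j ≠ v2}), ι w j.val = w j := fun w j => by
    show (if h : j.val ≠ v1 ∧ j.val ≠ v2 then w ⟨j.val, h⟩ else 0) = w j
    rw [dif_pos j.2]
  have hιinj : Function.Injective ι := by
    intro w w' h
    funext j
    have := congrFun h j.val
    rwa [hι3, hι3] at this
  -- qf on embedded vectors
  have h_qf_ι : ∀ w, star (ι w) ⬝ᵥ B *ᵥ (ι w) = star w ⬝ᵥ H' *ᵥ w := by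
    intro w
    rw [dotProduct_eq_sum, dotProduct_eq_sum]
    rw [sum_sub _ (by simp [hι1]) (by simp [hι2])]
    refine Finset.sum_congr rfl fun j _ => ?_
    rw [Pi.star_apply, Pi.star_apply, hι3, mulVec_apply'', mulVec_apply'']
    congr 1
    rw [sum_sub _ (by rw [hι1, mul_zero]) (by rw [hι2, mul_zero])]
    refine Finset.sum_congr rfl fun k _ => ?_
    rw [hι3, hH'def, Matrix.submatrix_apply, hBblock _ _ j.2.1 j.2.2 k.2.1 k.2.2]
  -- the special vectors
  have hBu : ∀ z : ℂ, B *ᵥ ((Pi.single v1 1 + Pi.single v2 z : n → ℂ))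
      = Pi.single v2 (star a) + Pi.single v1 (a * z) := by
    intro z
    rw [Matrix.mulVec_add, Matrix.mulVec_single, Matrix.mulVec_single]
    congr 1
    · funext j; simp only [Pi.smul_apply, Matrix.col_apply, op_smul_eq_mul]; rw [mul_one, hBv1']
    · funext j
      simp only [Pi.smul_apply, Matrix.col_apply, op_smul_eq_mul]
      by_cases hj : j = v1
      · rw [hj, Pi.single_eq_same,
          show B v1 v2 = a from by rw [hBv1, Pi.single_eq_same]]
      · rw [Pi.single_eq_of_ne hj]
        by_cases hj2 : j = v2
        · rw [hj2, hBv2v2, zero_mul]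
        · rw [hBv2' j hj hj2, zero_mul]
  have hstaru : ∀ z : ℂ, star ((Pi.single v1 1 + Pi.single v2 z : n → ℂ))
      = Pi.single v1 1 + Pi.single v2 (star z) := by
    intro z
    rw [star_add, hsstar, hsstar, star_one]
  have hdotu : ∀ z : ℂ, star ((Pi.single v1 1 + Pi.single v2 z : n → ℂ)) ⬝ᵥ
      B *ᵥ ((Pi.single v1 1 + Pi.single v2 z : n → ℂ)) = a * z + star z * star a := by
    intro z
    rw [hBu, hstaru, add_dotProduct, single_dotProduct, single_dotProduct]
    simp only [Pi.add_apply]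
    rw [Pi.single_eq_of_ne hne, Pi.single_eq_same, Pi.single_eq_same,
      Pi.single_eq_of_ne (Ne.symm hne)]
    ring
  have hqfu_pos : qf B ((Pi.single v1 1 + Pi.single v2 (star a) : n → ℂ)) = 2 * Complex.normSq a := by
    rw [qf_def, hdotu, star_star, show star a = (starRingEnd ℂ) a from rfl, Complex.mul_conj,
      ← Complex.ofReal_add, Complex.ofReal_re]
    ring
  have hqfu_neg : qf B ((Pi.single v1 1 + Pi.single v2 (-(star a)) : n → ℂ))
      = -(2 * Complex.normSq a) := by
    rw [qf_def, hdotu, star_neg, star_star, mul_neg, neg_mul,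
      show star a = (starRingEnd ℂ) a from rfl, Complex.mul_conj,
      ← neg_add, ← Complex.ofReal_add, Complex.neg_re, Complex.ofReal_re]
    ring
  have hu0 : ∀ z : ℂ, ((Pi.single v1 1 + Pi.single v2 z : n → ℂ)) ≠ 0 := by
    intro z h
    have := congrFun h v1
    rw [Pi.add_apply, Pi.single_eq_same, Pi.single_eq_of_ne hne, Pi.zero_apply] at this
    simp at this
  -- cross terms vanish
  have hcross1 : ∀ (w : {j : n // j ≠ v1 ∧ j ≠ v2} → ℂ) (z : ℂ),
      star (ι w) ⬝ᵥ B *ᵥ ((Pi.single v1 1 + Pi.single v2 z : n → ℂ)) = 0 := by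
    intro w z
    rw [hBu, dotProduct_add, dotProduct_single, dotProduct_single,
      Pi.star_apply, Pi.star_apply, hι1, hι2]
    simp
  have hcross2 : ∀ (w : {j : n // j ≠ v1 ∧ j ≠ v2} → ℂ) (z : ℂ),
      star ((Pi.single v1 1 + Pi.single v2 z : n → ℂ)) ⬝ᵥ B *ᵥ (ι w) = 0 := by
    intro w z
    rw [hstaru, add_dotProduct, single_dotProduct, single_dotProduct]
    have h1 : (B *ᵥ ι w) v1 = 0 := by
      rw [mulVec_apply'']
      refine Finset.sum_eq_zero fun k _ => ?_
      by_cases hk2 : k = v2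
      · rw [hk2, hι2, mul_zero]
      · rw [hBv1, Pi.single_eq_of_ne hk2, zero_mul]
    have h2 : (B *ᵥ ι w) v2 = 0 := by
      rw [mulVec_apply'']
      refine Finset.sum_eq_zero fun k _ => ?_
      by_cases hk1 : k = v1
      · rw [hk1, hι1, mul_zero]
      · by_cases hk2 : k = v2
        · rw [hk2, hι2, mul_zero]
        · rw [hBv2 k hk1 hk2, zero_mul]
    rw [h1, h2]
    ring
  -- qf additivity helpers
  have hqf_add : ∀ (x y : n → ℂ), star x ⬝ᵥ B *ᵥ y = 0 → star y ⬝ᵥ B *ᵥ x = 0 →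
      qf B (x + y) = qf B x + qf B y := by
    intro x y h1 h2
    rw [qf_def, qf_def, qf_def, star_add, Matrix.mulVec_add, add_dotProduct,
      dotProduct_add, dotProduct_add, h1, h2]
    simp
  have hqf_smul : ∀ (Mb : Matrix n n ℂ) (t : ℂ) (x : n → ℂ),
      qf Mb (t • x) = Complex.normSq t * qf Mb x := by
    intro Mb t x
    rw [qf_def, qf_def, star_smul, Matrix.mulVec_smul, smul_dotProduct,
      dotProduct_smul, smul_eq_mul, smul_eq_mul, ← mul_assoc,
      show star t = (starRingEnd ℂ) t from rfl, ← Complex.normSq_eq_conj_mul_self]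
    simp [Complex.mul_re]
  
  have h_qf_ι' : ∀ w, qf B (ι w) = qf H' w := fun w => congrArg Complex.re (h_qf_ι w)
  have hqf0 : qf H' 0 = 0 := by
    rw [qf_def]; simp
  -- building subspaces for B out of subspaces for H'
  have build : ∀ (W' : Submodule ℂ ({j : n // j ≠ v1 ∧ j ≠ v2} → ℂ)) (z : ℂ),
      ∃ W : Submodule ℂ (n → ℂ), finrank ℂ W = finrank ℂ W' + 1 ∧
        ∀ x ∈ W, ∃ w ∈ W', ∃ t : ℂ,
          x = ι w + t • ((Pi.single v1 1 + Pi.single v2 z : n → ℂ)) ∧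
          qf B x = qf H' w
            + Complex.normSq t * qf B ((Pi.single v1 1 + Pi.single v2 z : n → ℂ)) := by
    intro W' z
    set u : n → ℂ := (Pi.single v1 1 + Pi.single v2 z : n → ℂ) with hu
    refine ⟨W'.map ι ⊔ Submodule.span ℂ {u}, ?_, ?_⟩
    · have hmap : finrank ℂ (W'.map ι) = finrank ℂ W' :=
        (LinearEquiv.finrank_eq (Submodule.equivMapOfInjective ι hιinj W')).symm
      have hspan : finrank ℂ (Submodule.span ℂ {u}) = 1 := finrank_span_singleton (hu0 z)
      have hinf : W'.map ι ⊓ Submodule.span ℂ {u} = ⊥ := by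
        rw [Submodule.eq_bot_iff]
        intro x hx
        rw [Submodule.mem_inf] at hx
        obtain ⟨hx1, hx2⟩ := hx
        rw [Submodule.mem_span_singleton] at hx2
        obtain ⟨t, rfl⟩ := hx2
        obtain ⟨w, hw, hwx⟩ := hx1
        have h1 : (t • u) v1 = t := by
          rw [Pi.smul_apply, hu, Pi.add_apply, Pi.single_eq_same, Pi.single_eq_of_ne hne]
          simp
        have h2 : (t • u) v1 = 0 := by rw [← hwx]; exact hι1 w
        rw [h1] at h2
        rw [h2, zero_smul]
      have hsum := Submodule.finrank_sup_add_finrank_inf_eq (W'.map ι) (Submodule.span ℂ {u})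
      rw [hinf, finrank_bot, add_zero] at hsum
      rw [hsum, hmap, hspan]
    · intro x hx
      rw [Submodule.mem_sup] at hx
      obtain ⟨y, hy, zz, hz, rfl⟩ := hx
      obtain ⟨w, hw, rfl⟩ := hy
      rw [Submodule.mem_span_singleton] at hz
      obtain ⟨t, rfl⟩ := hz
      refine ⟨w, hw, t, rfl, ?_⟩
      have hc1 : star (ι w) ⬝ᵥ B *ᵥ (t • u) = 0 := by
        rw [Matrix.mulVec_smul, dotProduct_smul, hu, hcross1, smul_zero]
      have hc2 : star (t • u) ⬝ᵥ B *ᵥ (ι w) = 0 := by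
        rw [star_smul, smul_dotProduct, hu, hcross2, smul_zero]
      rw [hqf_add _ _ hc1 hc2, h_qf_ι', hqf_smul]
  -- cardinality of the subtype
  have hcard2 : Fintype.card {j : n // j ≠ v1 ∧ j ≠ v2} + 2 = Fintype.card n := by
    have he : Fintype.card {j : n // j ≠ v1 ∧ j ≠ v2}
        = Fintype.card {j : n // ¬ (j = v1 ∨ j = v2)} :=
      Fintype.card_congr (Equiv.subtypeEquivRight (by intro x; push_neg; rfl))
    have h1 := Fintype.card_subtype_compl (fun j : n => j = v1 ∨ j = v2)
    have h2 : Fintype.card {j : n // j = v1 ∨ j = v2} = 2 := by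
      rw [Fintype.card_subtype]
      rw [show Finset.univ.filter (fun j : n => j = v1 ∨ j = v2) = {v1, v2} from by
        ext j; simp]
      rw [Finset.card_insert_of_notMem (by simp [hne]), Finset.card_singleton]
    have h3 := Fintype.card_subtype_le (fun j : n => j = v1 ∨ j = v2)
    rw [he, h1, h2]
    omega
  -- the inertia of B via the block structure
  have hnormSq_pos : 0 < Complex.normSq a := Complex.normSq_pos.mpr ha0
  have hposB : posIdx hBherm = posIdx hH' + 1 := by
    obtain ⟨Wp', hWp'1, hWp'2⟩ := exists_pos hH'
    obtain ⟨Wn', hWn'1, hWn'2⟩ := exists_nonpos hH'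
    obtain ⟨W1, hW1rank, hW1mem⟩ := build Wp' (star a)
    obtain ⟨W2, hW2rank, hW2mem⟩ := build Wn' (-(star a))
    have h := posIdx_eq_of hBherm (W := W1) (W' := W2)
      (by
        intro x hx hx0
        obtain ⟨w, hw, t, hxe, hqe⟩ := hW1mem x hx
        rw [hqe, hqfu_pos]
        by_cases hw0 : w = 0
        · have ht0 : t ≠ 0 := by
            intro h0
            apply hx0
            rw [hxe, hw0, map_zero, h0, zero_smul, zero_add]
          rw [hw0, hqf0]
          have := Complex.normSq_pos.mpr ht0
          nlinarith
        · have h1 := hWp'2 w hw hw0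
          have h2 : 0 ≤ Complex.normSq t * (2 * Complex.normSq a) := by
            have := Complex.normSq_nonneg t
            nlinarith
          linarith)
      (by
        intro x hx
        obtain ⟨w, hw, t, hxe, hqe⟩ := hW2mem x hx
        rw [hqe, hqfu_neg]
        have h1 := hWn'2 w hw
        have h2 : Complex.normSq t * -(2 * Complex.normSq a) ≤ 0 := by
          have := Complex.normSq_nonneg t
          nlinarith
        linarith)
      (by
        rw [hW1rank, hW2rank]
        omega)
    rw [h, hW1rank, hWp'1]
  have hnegB : negIdx hBherm = negIdx hH' + 1 := by
    obtain ⟨Wp', hWp'1, hWp'2⟩ := exists_neg hH'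
    obtain ⟨Wn', hWn'1, hWn'2⟩ := exists_nonneg hH'
    obtain ⟨W1, hW1rank, hW1mem⟩ := build Wp' (-(star a))
    obtain ⟨W2, hW2rank, hW2mem⟩ := build Wn' (star a)
    have h := negIdx_eq_of hBherm (W := W1) (W' := W2)
      (by
        intro x hx hx0
        obtain ⟨w, hw, t, hxe, hqe⟩ := hW1mem x hx
        rw [hqe, hqfu_neg]
        by_cases hw0 : w = 0
        · have ht0 : t ≠ 0 := by
            intro h0
            apply hx0
            rw [hxe, hw0, map_zero, h0, zero_smul, zero_add]
          rw [hw0, hqf0]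
          have := Complex.normSq_pos.mpr ht0
          nlinarith
        · have h1 := hWp'2 w hw hw0
          have h2 : Complex.normSq t * -(2 * Complex.normSq a) ≤ 0 := by
            have := Complex.normSq_nonneg t
            nlinarith
          linarith)
      (by
        intro x hx
        obtain ⟨w, hw, t, hxe, hqe⟩ := hW2mem x hx
        rw [hqe, hqfu_pos]
        have h1 := hWn'2 w hw
        have h2 : 0 ≤ Complex.normSq t * (2 * Complex.normSq a) := by
          have := Complex.normSq_nonneg t
          nlinarith
        linarith)
      (by
        rw [hW1rank, hW2rank]
        omega)
    rw [h, hW1rank, hWp'1]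
  have hp : posIdx hH = posIdx hH' + 1 := by rw [hpHB, hposB]
  have hn : negIdx hH = negIdx hH' + 1 := by rw [hnHB, hnegB]
  refine ⟨hp, hn, ?_⟩
  have t1 := tri hH
  have t2 := tri hH'
  omega
end

section
/- The Hermitian adjacency matrix of the mixed complete tripartite graph C₃→(t₁, t₂, t₃) has rank 2. -/
open Matrix

/-- The Hermitian adjacency matrix of the mixed complete tripartite graph
`C₃→(t₁, t₂, t₃)`: vertex classes `A`, `B`, `C` of sizes `t₁`, `t₂`, `t₃`, with all
arcs directed from `A` to `B`, from `B` to `C`, and from `C` to `A`. -/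
def triAdj (t₁ t₂ t₃ : ℕ) :
    Matrix (Fin t₁ ⊕ Fin t₂ ⊕ Fin t₃) (Fin t₁ ⊕ Fin t₂ ⊕ Fin t₃) ℂ :=
  fun u w => match u, w with
  | .inl _, .inr (.inl _) => Complex.I
  | .inr (.inl _), .inl _ => -Complex.I
  | .inr (.inl _), .inr (.inr _) => Complex.I
  | .inr (.inr _), .inr (.inl _) => -Complex.I
  | .inr (.inr _), .inl _ => Complex.I
  | .inl _, .inr (.inr _) => -Complex.I
  | _, _ => 0

/-- Left factor of the rank-2 factorization. -/
def triL (t₁ t₂ t₃ : ℕ) : Matrix (Fin t₁ ⊕ Fin t₂ ⊕ Fin t₃) (Fin 2) ℂ :=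
  fun u k => match u, k with
  | .inl _, 0 => 1
  | .inl _, 1 => 0
  | .inr (.inl _), 0 => 0
  | .inr (.inl _), 1 => 1
  | .inr (.inr _), 0 => -1
  | .inr (.inr _), 1 => -1

/-- Right factor of the rank-2 factorization. -/
def triR (t₁ t₂ t₃ : ℕ) : Matrix (Fin 2) (Fin t₁ ⊕ Fin t₂ ⊕ Fin t₃) ℂ :=
  fun k w => match k, w with
  | 0, .inl _ => 0
  | 0, .inr (.inl _) => Complex.I
  | 0, .inr (.inr _) => -Complex.I
  | 1, .inl _ => -Complex.I
  | 1, .inr (.inl _) => 0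
  | 1, .inr (.inr _) => Complex.I

lemma triAdj_factor (t₁ t₂ t₃ : ℕ) :
    triAdj t₁ t₂ t₃ = triL t₁ t₂ t₃ * triR t₁ t₂ t₃ := by
  ext u w
  rcases u with a | b | c <;> rcases w with a' | b' | c' <;>
    simp [triAdj, triL, triR, Matrix.mul_apply, Fin.sum_univ_two]

/-- The Hermitian adjacency matrix of `C₃→(t₁, t₂, t₃)` has rank 2. -/
theorem triAdj_rank (t₁ t₂ t₃ : ℕ) (h₁ : 1 ≤ t₁) (h₂ : 1 ≤ t₂) (h₃ : 1 ≤ t₃) :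
    (triAdj t₁ t₂ t₃).rank = 2 := by
  refine le_antisymm ?_ ?_
  · calc (triAdj t₁ t₂ t₃).rank = (triL t₁ t₂ t₃ * triR t₁ t₂ t₃).rank := by
          rw [triAdj_factor]
      _ ≤ (triL t₁ t₂ t₃).rank := Matrix.rank_mul_le_left _ _
      _ ≤ Fintype.card (Fin 2) := Matrix.rank_le_card_width _
      _ = 2 := by simp
  · -- lower bound: two columns are linearly independent
    set M := triAdj t₁ t₂ t₃ with hM
    let a₀ : Fin t₁ ⊕ Fin t₂ ⊕ Fin t₃ := .inl ⟨0, h₁⟩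
    let b₀ : Fin t₁ ⊕ Fin t₂ ⊕ Fin t₃ := .inr (.inl ⟨0, h₂⟩)
    let c₀ : Fin t₁ ⊕ Fin t₂ ⊕ Fin t₃ := .inr (.inr ⟨0, h₃⟩)
    let v : Fin 2 → ((Fin t₁ ⊕ Fin t₂ ⊕ Fin t₃) → ℂ) := ![Mᵀ b₀, Mᵀ c₀]
    have hv : LinearIndependent ℂ v := by
      rw [show v = ![Mᵀ b₀, Mᵀ c₀] from rfl, LinearIndependent.pair_iff]
      intro s t hst
      have hb : s * Mᵀ b₀ b₀ + t * Mᵀ c₀ b₀ = 0 := congrFun hst b₀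
      have ha : s * Mᵀ b₀ a₀ + t * Mᵀ c₀ a₀ = 0 := congrFun hst a₀
      have hMbb : Mᵀ b₀ b₀ = 0 := rfl
      have hMcb : Mᵀ c₀ b₀ = Complex.I := rfl
      have hMba : Mᵀ b₀ a₀ = Complex.I := rfl
      have hMca : Mᵀ c₀ a₀ = -Complex.I := rfl
      rw [hMbb, hMcb] at hb
      rw [hMba, hMca] at ha
      have ht : t = 0 := by
        have h' : t * Complex.I = 0 := by linear_combination hb
        rcases mul_eq_zero.mp h' with h | h
        · exact h
        · exact absurd h Complex.I_ne_zero
      subst ht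
      refine ⟨?_, rfl⟩
      simp only [mul_zero, add_zero, zero_mul] at ha
      rcases mul_eq_zero.mp ha with h | h
      · exact h
      · exact absurd h Complex.I_ne_zero
    have hrange : ∀ k, v k ∈ LinearMap.range M.mulVecLin := by
      intro k
      fin_cases k
      · exact ⟨Pi.single b₀ 1, by rw [Matrix.mulVecLin_apply, M.mulVec_single_one b₀]; rfl⟩
      · exact ⟨Pi.single c₀ 1, by rw [Matrix.mulVecLin_apply, M.mulVec_single_one c₀]; rfl⟩
    have hspan : Submodule.span ℂ (Set.range v) ≤ LinearMap.range M.mulVecLin := by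
      rw [Submodule.span_le]
      rintro x ⟨k, rfl⟩
      exact hrange k
    calc (2 : ℕ) = Module.finrank ℂ (Submodule.span ℂ (Set.range v)) := by
          rw [finrank_span_eq_card hv]; simp
      _ ≤ Module.finrank ℂ (LinearMap.range M.mulVecLin) := Submodule.finrank_mono hspan
      _ = M.rank := rfl
end

section
/- Removing a duplicate row/column (twin) from a Hermitian matrix preserves the positive inertia index, the negative inertia index, and the rank. Precisely: if H is an (n+1)×(n+1) Hermitian matrix in which two rows (with the corresponding columns) are equal, and H' is the n×n Hermitian matrix obtained by deleting one of those duplicate rows and its column, then p(H) = p(H'), n(H) = n(H'), and rank(H) = rank(H'). -/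
set_option linter.unusedSectionVars false
set_option linter.unnecessarySeqFocus false


open Matrix Finset Module

variable {m : Type*} [Fintype m] [DecidableEq m]

/-- The quadratic form of a matrix. -/
noncomputable def quadF (M : Matrix m m ℂ) (x : m → ℂ) : ℝ := (star x ⬝ᵥ M *ᵥ x).re

lemma quad_eigen {M : Matrix m m ℂ} (hM : M.IsHermitian) (c : m → ℂ) :
    quadF M ((hM.eigenvectorUnitary : Matrix m m ℂ) *ᵥ c)
      = ∑ i, hM.eigenvalues i * Complex.normSq (c i) := by
  set U := (hM.eigenvectorUnitary : Matrix m m ℂ) with hU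
  have key : star (U *ᵥ c) ⬝ᵥ M *ᵥ (U *ᵥ c)
      = star c ⬝ᵥ (diagonal ((RCLike.ofReal ∘ hM.eigenvalues : m → ℂ))) *ᵥ c := by
    rw [star_mulVec, ← (show star U * M * U = diagonal (RCLike.ofReal ∘ hM.eigenvalues) by
      rw [hU, ← Unitary.conjStarAlgAut_star_apply (S := ℂ)]
      exact hM.conjStarAlgAut_star_eigenvectorUnitary)]
    rw [mulVec_mulVec, dotProduct_mulVec, vecMul_vecMul]
    rw [show Uᴴ = star U from rfl, Matrix.mul_assoc, ← dotProduct_mulVec, hU]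
  rw [quadF, key]
  rw [dotProduct, Complex.re_sum]
  refine Finset.sum_congr rfl fun i _ => ?_
  simp only [mulVec_diagonal, Pi.star_apply, Function.comp_apply]
  have h1 : (RCLike.ofReal (hM.eigenvalues i) : ℂ) = (hM.eigenvalues i : ℂ) := rfl
  rw [h1, show star (c i) * ((hM.eigenvalues i : ℂ) * c i)
      = (hM.eigenvalues i : ℂ) * (star (c i) * c i) by ring,
    Complex.star_def, ← Complex.normSq_eq_conj_mul_self, ← Complex.ofReal_mul,
    Complex.ofReal_re]


/-- Extension-by-zero linear map. -/
noncomputable def extMap (p : m → Prop) [DecidablePred p] : ({i // p i} → ℂ) →ₗ[ℂ] (m → ℂ) where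
  toFun c := fun i => if h : p i then c ⟨i, h⟩ else 0
  map_add' a b := by funext i; by_cases h : p i <;> simp [h]
  map_smul' r a := by funext i; by_cases h : p i <;> simp [h]

lemma extMap_apply_pos {p : m → Prop} [DecidablePred p] (c : {i // p i} → ℂ) (j : {i // p i}) :
    extMap p c j.1 = c j := by
  simp [extMap, j.2]

lemma extMap_apply_neg {p : m → Prop} [DecidablePred p] (c : {i // p i} → ℂ) {i : m}
    (h : ¬ p i) : extMap p c i = 0 := by
  simp [extMap, h]

lemma extMap_injective (p : m → Prop) [DecidablePred p] : Function.Injective (extMap p) := by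
  intro a b hab
  funext j
  have := congrFun hab j.1
  rwa [extMap_apply_pos, extMap_apply_pos] at this

noncomputable def eigMap {M : Matrix m m ℂ} (hM : M.IsHermitian) (p : m → Prop)
    [DecidablePred p] : ({i // p i} → ℂ) →ₗ[ℂ] (m → ℂ) :=
  ((hM.eigenvectorUnitary : Matrix m m ℂ).mulVecLin).comp (extMap p)

lemma eigMap_injective {M : Matrix m m ℂ} (hM : M.IsHermitian) (p : m → Prop)
    [DecidablePred p] : Function.Injective (eigMap hM p) := by
  have hU : Function.Injective ((hM.eigenvectorUnitary : Matrix m m ℂ).mulVecLin) := by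
    intro x y hxy
    have : star (hM.eigenvectorUnitary : Matrix m m ℂ) *ᵥ
        ((hM.eigenvectorUnitary : Matrix m m ℂ) *ᵥ x)
        = star (hM.eigenvectorUnitary : Matrix m m ℂ) *ᵥ
        ((hM.eigenvectorUnitary : Matrix m m ℂ) *ᵥ y) := by
      simpa only [mulVecLin_apply] using congrArg _ hxy
    simpa [mulVec_mulVec, Unitary.coe_star_mul_self] using this
  exact hU.comp (extMap_injective p)

lemma finrank_range_eigMap {M : Matrix m m ℂ} (hM : M.IsHermitian) (p : m → Prop)
    [DecidablePred p] :
    finrank ℂ (LinearMap.range (eigMap hM p)) = Fintype.card {i // p i} := by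
  rw [LinearMap.finrank_range_of_inj (eigMap_injective hM p)]
  simp [finrank_fintype_fun_eq_card]

lemma quad_eigMap {M : Matrix m m ℂ} (hM : M.IsHermitian) (p : m → Prop)
    [DecidablePred p] (c : {i // p i} → ℂ) :
    quadF M (eigMap hM p c) = ∑ i, hM.eigenvalues i * Complex.normSq (extMap p c i) := by
  rw [eigMap, LinearMap.comp_apply, mulVecLin_apply, quad_eigen]

lemma exists_pos_subspace {M : Matrix m m ℂ} (hM : M.IsHermitian) :
    ∃ W : Submodule ℂ (m → ℂ), finrank ℂ W = posIdx hM ∧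
      ∀ x ∈ W, x ≠ 0 → 0 < quadF M x := by
  refine ⟨LinearMap.range (eigMap hM (fun i => 0 < hM.eigenvalues i)),
    finrank_range_eigMap hM _, ?_⟩
  rintro x ⟨c, rfl⟩ hx
  have hc : c ≠ 0 := by rintro rfl; simp at hx
  rw [quad_eigMap]
  obtain ⟨j, hj⟩ : ∃ j, c j ≠ 0 := by
    by_contra h; push_neg at h; exact hc (funext h)
  refine Finset.sum_pos' (fun i _ => ?_) ⟨j.1, Finset.mem_univ _, ?_⟩
  · by_cases h : 0 < hM.eigenvalues i
    · exact mul_nonneg h.le (Complex.normSq_nonneg _)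
    · rw [extMap_apply_neg c h]; simp
  · rw [extMap_apply_pos]
    exact mul_pos j.2 (by simpa using hj)

lemma exists_neg_subspace {M : Matrix m m ℂ} (hM : M.IsHermitian) :
    ∃ W : Submodule ℂ (m → ℂ), finrank ℂ W = negIdx hM ∧
      ∀ x ∈ W, x ≠ 0 → quadF M x < 0 := by
  refine ⟨LinearMap.range (eigMap hM (fun i => hM.eigenvalues i < 0)),
    finrank_range_eigMap hM _, ?_⟩
  rintro x ⟨c, rfl⟩ hx
  have hc : c ≠ 0 := by rintro rfl; simp at hx
  rw [quad_eigMap]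
  obtain ⟨j, hj⟩ : ∃ j, c j ≠ 0 := by
    by_contra h; push_neg at h; exact hc (funext h)
  refine Finset.sum_neg' (fun i _ => ?_) ⟨j.1, Finset.mem_univ _, ?_⟩
  · by_cases h : hM.eigenvalues i < 0
    · exact mul_nonpos_of_nonpos_of_nonneg h.le (Complex.normSq_nonneg _)
    · rw [extMap_apply_neg c h]; simp
  · rw [extMap_apply_pos]
    exact mul_neg_of_neg_of_pos j.2 (by simpa using hj)

lemma le_posIdx {M : Matrix m m ℂ} (hM : M.IsHermitian) (W : Submodule ℂ (m → ℂ))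
    (hW : ∀ x ∈ W, x ≠ 0 → 0 < quadF M x) : finrank ℂ W ≤ posIdx hM := by
  by_contra hlt
  push_neg at hlt
  set W' := LinearMap.range (eigMap hM (fun i => ¬ 0 < hM.eigenvalues i)) with hW'def
  have hW'rank : finrank ℂ W' = Fintype.card m - posIdx hM := by
    rw [hW'def, finrank_range_eigMap, posIdx, Fintype.card_subtype_compl]
  have hW'neg : ∀ x ∈ W', quadF M x ≤ 0 := by
    rintro x ⟨c, rfl⟩
    rw [quad_eigMap]
    refine Finset.sum_nonpos fun i _ => ?_
    by_cases h : 0 < hM.eigenvalues i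
    · rw [extMap_apply_neg c (by simpa using h)]; simp
    · exact mul_nonpos_of_nonpos_of_nonneg (not_lt.mp h) (Complex.normSq_nonneg _)
  have hsum : finrank ℂ (W ⊔ W' : Submodule ℂ (m → ℂ)) + finrank ℂ (W ⊓ W' : Submodule ℂ (m → ℂ))
      = finrank ℂ W + finrank ℂ W' := Submodule.finrank_sup_add_finrank_inf_eq W W'
  have hle : finrank ℂ (W ⊔ W' : Submodule ℂ (m → ℂ)) ≤ Fintype.card m := by
    simpa [finrank_fintype_fun_eq_card] using
      (Submodule.finrank_le (W ⊔ W' : Submodule ℂ (m → ℂ)))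
  have hppos : 0 < finrank ℂ (W ⊓ W' : Submodule ℂ (m → ℂ)) := by
    have hple : posIdx hM ≤ Fintype.card m := Fintype.card_subtype_le _
    omega
  obtain ⟨x, hxmem, hx0⟩ := Submodule.exists_mem_ne_zero_of_ne_bot (p := W ⊓ W')
    (by intro hbot; rw [hbot, finrank_bot] at hppos; exact lt_irrefl 0 hppos)
  exact absurd (hW x hxmem.1 hx0) (not_lt.mpr (hW'neg x hxmem.2))

lemma le_negIdx {M : Matrix m m ℂ} (hM : M.IsHermitian) (W : Submodule ℂ (m → ℂ))
    (hW : ∀ x ∈ W, x ≠ 0 → quadF M x < 0) : finrank ℂ W ≤ negIdx hM := by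
  by_contra hlt
  push_neg at hlt
  set W' := LinearMap.range (eigMap hM (fun i => ¬ hM.eigenvalues i < 0)) with hW'def
  have hW'rank : finrank ℂ W' = Fintype.card m - negIdx hM := by
    rw [hW'def, finrank_range_eigMap, negIdx, Fintype.card_subtype_compl]
  have hW'neg : ∀ x ∈ W', 0 ≤ quadF M x := by
    rintro x ⟨c, rfl⟩
    rw [quad_eigMap]
    refine Finset.sum_nonneg fun i _ => ?_
    by_cases h : hM.eigenvalues i < 0
    · rw [extMap_apply_neg c (by simpa using h)]; simp
    · exact mul_nonneg (not_lt.mp h) (Complex.normSq_nonneg _)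
  have hsum : finrank ℂ (W ⊔ W' : Submodule ℂ (m → ℂ)) + finrank ℂ (W ⊓ W' : Submodule ℂ (m → ℂ))
      = finrank ℂ W + finrank ℂ W' := Submodule.finrank_sup_add_finrank_inf_eq W W'
  have hle : finrank ℂ (W ⊔ W' : Submodule ℂ (m → ℂ)) ≤ Fintype.card m := by
    simpa [finrank_fintype_fun_eq_card] using
      (Submodule.finrank_le (W ⊔ W' : Submodule ℂ (m → ℂ)))
  have hppos : 0 < finrank ℂ (W ⊓ W' : Submodule ℂ (m → ℂ)) := by
    have hple : negIdx hM ≤ Fintype.card m := Fintype.card_subtype_le _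
    omega
  obtain ⟨x, hxmem, hx0⟩ := Submodule.exists_mem_ne_zero_of_ne_bot (p := W ⊓ W')
    (by intro hbot; rw [hbot, finrank_bot] at hppos; exact lt_irrefl 0 hppos)
  exact absurd (hW x hxmem.1 hx0) (not_lt.mpr (hW'neg x hxmem.2))

section Transfer

variable {a : Type*} [Fintype a] [DecidableEq a] {b : Type*} [Fintype b] [DecidableEq b]

lemma posIdx_le_of_map {A : Matrix a a ℂ} {B : Matrix b b ℂ} (hA : A.IsHermitian)
    (hB : B.IsHermitian) (f : (b → ℂ) →ₗ[ℂ] (a → ℂ)) (hf : ∀ x, quadF A (f x) = quadF B x) :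
    posIdx hB ≤ posIdx hA := by
  obtain ⟨W, hWrank, hWpos⟩ := exists_pos_subspace hB
  set V := W.map f with hVdef
  have hVpos : ∀ y ∈ V, y ≠ 0 → 0 < quadF A y := by
    rintro y ⟨x, hxW, rfl⟩ hy
    have hx0 : x ≠ 0 := by rintro rfl; simp at hy
    rw [hf]; exact hWpos x hxW hx0
  have hinj : Function.Injective (f.comp W.subtype) := by
    rw [← LinearMap.ker_eq_bot, LinearMap.ker_eq_bot']
    rintro ⟨x, hxW⟩ hfx
    have hfx' : f x = 0 := hfx
    ext1
    by_contra hx0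
    have h1 := hWpos x hxW hx0
    rw [← hf x, hfx'] at h1
    simp [quadF] at h1
  have hVeq : V = LinearMap.range (f.comp W.subtype) := by
    rw [LinearMap.range_comp, Submodule.range_subtype]
  have hVrank : finrank ℂ V = finrank ℂ W := by
    rw [hVeq, LinearMap.finrank_range_of_inj hinj]
  calc posIdx hB = finrank ℂ V := by rw [hVrank, hWrank]
    _ ≤ posIdx hA := le_posIdx hA V hVpos

lemma negIdx_le_of_map {A : Matrix a a ℂ} {B : Matrix b b ℂ} (hA : A.IsHermitian)
    (hB : B.IsHermitian) (f : (b → ℂ) →ₗ[ℂ] (a → ℂ)) (hf : ∀ x, quadF A (f x) = quadF B x) :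
    negIdx hB ≤ negIdx hA := by
  obtain ⟨W, hWrank, hWpos⟩ := exists_neg_subspace hB
  set V := W.map f with hVdef
  have hVpos : ∀ y ∈ V, y ≠ 0 → quadF A y < 0 := by
    rintro y ⟨x, hxW, rfl⟩ hy
    have hx0 : x ≠ 0 := by rintro rfl; simp at hy
    rw [hf]; exact hWpos x hxW hx0
  have hinj : Function.Injective (f.comp W.subtype) := by
    rw [← LinearMap.ker_eq_bot, LinearMap.ker_eq_bot']
    rintro ⟨x, hxW⟩ hfx
    have hfx' : f x = 0 := hfx
    ext1
    by_contra hx0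
    have h1 := hWpos x hxW hx0
    rw [← hf x, hfx'] at h1
    simp [quadF] at h1
  have hVeq : V = LinearMap.range (f.comp W.subtype) := by
    rw [LinearMap.range_comp, Submodule.range_subtype]
  have hVrank : finrank ℂ V = finrank ℂ W := by
    rw [hVeq, LinearMap.finrank_range_of_inj hinj]
  calc negIdx hB = finrank ℂ V := by rw [hVrank, hWrank]
    _ ≤ negIdx hA := le_negIdx hA V hVpos

lemma rank_eq_posIdx_add_negIdx {M : Matrix m m ℂ} (hM : M.IsHermitian) :
    M.rank = posIdx hM + negIdx hM := by
  rw [hM.rank_eq_card_non_zero_eigs, posIdx, negIdx]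
  rw [Fintype.card_subtype, Fintype.card_subtype, Fintype.card_subtype]
  rw [← Finset.card_union_of_disjoint]
  · congr 1
    ext i
    simp only [Finset.mem_filter, Finset.mem_union, Finset.mem_univ, true_and]
    constructor
    · intro h; rcases h.lt_or_gt with h' | h'
      · exact Or.inr h'
      · exact Or.inl h'
    · rintro (h | h)
      · exact h.ne'
      · exact h.ne
  · rw [Finset.disjoint_filter]
    intro i _ h1 h2
    exact absurd (h1.trans h2) (lt_irrefl _)

end Transfer


section Main

variable {n : ℕ}

/-- Insert a zero at position `u`. -/
noncomputable def insMap (u : Fin (n + 1)) : (Fin n → ℂ) →ₗ[ℂ] (Fin (n + 1) → ℂ) where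
  toFun y := fun i => (finSuccEquiv' u i).elim 0 y
  map_add' a b := by funext i; cases h : finSuccEquiv' u i <;> simp [h]
  map_smul' r a := by funext i; cases h : finSuccEquiv' u i <;> simp [h]

@[simp] lemma insMap_self (u : Fin (n + 1)) (y : Fin n → ℂ) : insMap u y u = 0 := by
  simp [insMap, finSuccEquiv'_at]

@[simp] lemma insMap_succAbove (u : Fin (n + 1)) (y : Fin n → ℂ) (j : Fin n) :
    insMap u y (u.succAbove j) = y j := by
  simp [insMap, finSuccEquiv'_succAbove]

/-- Merge coordinate `u` into coordinate `w` and delete coordinate `u`. -/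
noncomputable def mergeMap (u w : Fin (n + 1)) : (Fin (n + 1) → ℂ) →ₗ[ℂ] (Fin n → ℂ) where
  toFun x := fun j => x (u.succAbove j) + if u.succAbove j = w then x u else 0
  map_add' a b := by funext j; by_cases h : u.succAbove j = w <;> simp [h] <;> ring
  map_smul' r a := by funext j; by_cases h : u.succAbove j = w <;> simp [h] <;> ring

lemma sum_pair_split {β : Type*} [AddCommMonoid β] {u w : Fin (n + 1)} (huw : u ≠ w)
    (F G : Fin (n + 1) → β) (h1 : ∀ j, j ≠ u → j ≠ w → F j = G j)
    (h2 : F u + F w = G u + G w) : ∑ j, F j = ∑ j, G j := by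
  classical
  have hw : w ∈ (Finset.univ.erase u) := Finset.mem_erase.mpr ⟨Ne.symm huw, Finset.mem_univ w⟩
  rw [← Finset.add_sum_erase _ F (Finset.mem_univ u), ← Finset.add_sum_erase _ G (Finset.mem_univ u),
    ← Finset.add_sum_erase _ F hw, ← Finset.add_sum_erase _ G hw,
    ← add_assoc, ← add_assoc, h2]
  congr 1
  refine Finset.sum_congr rfl fun j hj => ?_
  rw [Finset.mem_erase, Finset.mem_erase] at hj
  exact h1 j hj.2.1 hj.1

lemma claimB (H : Matrix (Fin (n + 1)) (Fin (n + 1)) ℂ) (u : Fin (n + 1)) (y : Fin n → ℂ) :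
    star (insMap u y) ⬝ᵥ H *ᵥ (insMap u y)
      = star y ⬝ᵥ (H.submatrix u.succAbove u.succAbove) *ᵥ y := by
  rw [dotProduct, Fin.sum_univ_succAbove _ u]
  simp only [Pi.star_apply, insMap_self, star_zero, zero_mul, zero_add, insMap_succAbove]
  rw [dotProduct]
  refine Finset.sum_congr rfl fun j _ => ?_
  congr 1
  rw [mulVec, dotProduct, Fin.sum_univ_succAbove _ u, mulVec, dotProduct]
  simp [submatrix_apply]

lemma claimA (H : Matrix (Fin (n + 1)) (Fin (n + 1)) ℂ) (hH : H.IsHermitian)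
    (u w : Fin (n + 1)) (huw : u ≠ w) (htwin : ∀ j, H u j = H w j)
    (x : Fin (n + 1) → ℂ) :
    star x ⬝ᵥ H *ᵥ x = star (insMap u (mergeMap u w x)) ⬝ᵥ H *ᵥ (insMap u (mergeMap u w x)) := by
  set z := insMap u (mergeMap u w x) with hz
  have hcol : ∀ i, H i u = H i w := by
    intro i
    have h1 : H i u = star (H u i) := by
      conv_lhs => rw [← hH]
      rfl
    have h2 : H i w = star (H w i) := by
      conv_lhs => rw [← hH]
      rfl
    rw [h1, h2, htwin i]
  have hzu : z u = 0 := insMap_self u _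
  have hzel : ∀ j, j ≠ u → j ≠ w → z j = x j := by
    intro j hju hjw
    obtain ⟨k, rfl⟩ := Fin.exists_succAbove_eq hju
    rw [hz, insMap_succAbove]
    simp [mergeMap, hjw]
  have hzw : z w = x w + x u := by
    obtain ⟨k, hk⟩ := Fin.exists_succAbove_eq (Ne.symm huw)
    rw [← hk, hz, insMap_succAbove]
    simp [mergeMap, hk]
  have hmv : H *ᵥ x = H *ᵥ z := by
    funext i
    rw [mulVec, mulVec, dotProduct, dotProduct]
    refine sum_pair_split huw _ _ (fun j hju hjw => by rw [hzel j hju hjw]) ?_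
    rw [hzu, hzw, hcol i]
    ring
  rw [← hmv]
  have htz : (H *ᵥ x) u = (H *ᵥ x) w := by
    rw [mulVec, mulVec, dotProduct, dotProduct]
    exact Finset.sum_congr rfl fun j _ => by rw [htwin j]
  rw [dotProduct, dotProduct]
  refine sum_pair_split huw _ _ (fun j hju hjw => by simp [hzel j hju hjw]) ?_
  simp only [Pi.star_apply, hzu, hzw, star_zero, zero_mul, star_add]
  rw [htz]
  ring

end Main

/-- Removing a twin (a duplicate row together with the corresponding column) from a
Hermitian matrix preserves the positive inertia index, the negative inertia index, and
the rank. -/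
theorem twin_removal_inertia {n : ℕ} (H : Matrix (Fin (n + 1)) (Fin (n + 1)) ℂ)
    (hH : H.IsHermitian) (u w : Fin (n + 1)) (huw : u ≠ w)
    (htwin : ∀ j, H u j = H w j)
    (H' : Matrix (Fin n) (Fin n) ℂ)
    (hH'def : H' = H.submatrix u.succAbove u.succAbove)
    (hH' : H'.IsHermitian) :
    posIdx hH = posIdx hH' ∧ negIdx hH = negIdx hH' ∧ H.rank = H'.rank := by
  have hqB : ∀ y, quadF H (insMap u y) = quadF H' y := by
    intro y
    rw [quadF, quadF, claimB H u y, hH'def]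
  have hqA : ∀ x, quadF H' (mergeMap u w x) = quadF H x := by
    intro x
    rw [← hqB (mergeMap u w x), quadF, quadF, ← claimA H hH u w huw htwin x]
  have hp : posIdx hH = posIdx hH' :=
    le_antisymm (posIdx_le_of_map hH' hH (mergeMap u w) hqA)
      (posIdx_le_of_map hH hH' (insMap u) hqB)
  have hn : negIdx hH = negIdx hH' :=
    le_antisymm (negIdx_le_of_map hH' hH (mergeMap u w) hqA)
      (negIdx_le_of_map hH hH' (insMap u) hqB)
  refine ⟨hp, hn, ?_⟩
  rw [rank_eq_posIdx_add_negIdx hH, rank_eq_posIdx_add_negIdx hH', hp, hn]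
end

section
/- Let G̃ = M̃₁ • v • M̃₂ be the mixed graph obtained by identifying a vertex v' of mixed graph M̃₁ with a vertex v'' of mixed graph M̃₂ (M̃₁ and M̃₂ vertex-disjoint). Then p(M̃₁ - v') + p(M̃₂ - v'') ≤ p(G̃) ≤ p(M̃₁) + p(M̃₂), where p denotes the positive inertia index of the Hermitian adjacency matrix. -/
/-- `H(G̃) = [[A, α, 0], [α*, 0, β*], [0, β, B]]`: the Hermitian adjacency matrix of the
mixed graph obtained by identifying a vertex of `M̃₁ = [[A, α], [α*, 0]]` with a vertex of
`M̃₂ = [[0, β*], [β, B]]`. -/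
def cutBlock {m p : Type*} (A : Matrix m m ℂ) (B : Matrix p p ℂ)
    (α : m → ℂ) (β : p → ℂ) : Matrix (m ⊕ Unit ⊕ p) (m ⊕ Unit ⊕ p) ℂ :=
  fun x y => match x, y with
  | .inl i, .inl j => A i j
  | .inl i, .inr (.inl _) => α i
  | .inl _, .inr (.inr _) => 0
  | .inr (.inl _), .inl j => star (α j)
  | .inr (.inl _), .inr (.inl _) => 0
  | .inr (.inl _), .inr (.inr j) => star (β j)
  | .inr (.inr _), .inl _ => 0
  | .inr (.inr i), .inr (.inl _) => β i
  | .inr (.inr i), .inr (.inr j) => B i j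

/-- The Hermitian adjacency matrix `[[A, α], [α*, 0]]` of `M̃₁` (with `v'` last). -/
def borderR {m : Type*} (A : Matrix m m ℂ) (α : m → ℂ) :
    Matrix (m ⊕ Unit) (m ⊕ Unit) ℂ :=
  fun x y => match x, y with
  | .inl i, .inl j => A i j
  | .inl i, .inr _ => α i
  | .inr _, .inl j => star (α j)
  | .inr _, .inr _ => 0

/-- The Hermitian adjacency matrix `[[0, β*], [β, B]]` of `M̃₂` (with `v''` first). -/
def borderL {p : Type*} (B : Matrix p p ℂ) (β : p → ℂ) :
    Matrix (Unit ⊕ p) (Unit ⊕ p) ℂ :=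
  fun x y => match x, y with
  | .inl _, .inl _ => 0
  | .inl _, .inr j => star (β j)
  | .inr i, .inl _ => β i
  | .inr i, .inr j => B i j

/-! ### Auxiliary material -/

namespace PosIdxAux

open Matrix Complex

variable {n : Type*} [Fintype n] [DecidableEq n]

/-- The (real part of the) Hermitian quadratic form of a matrix. -/
noncomputable def qre (M : Matrix n n ℂ) (x : n → ℂ) : ℝ := (star x ⬝ᵥ M *ᵥ x).re

omit [DecidableEq n] in
@[simp] lemma qre_zero (M : Matrix n n ℂ) : qre M 0 = 0 := by simp [qre]

lemma qre_eq {M : Matrix n n ℂ} (hM : M.IsHermitian) (x : n → ℂ) :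
    qre M x = ∑ i, hM.eigenvalues i *
      Complex.normSq ((star (hM.eigenvectorUnitary : Matrix n n ℂ) *ᵥ x) i) := by
  set U : Matrix n n ℂ := (hM.eigenvectorUnitary : Matrix n n ℂ) with hU
  set y : n → ℂ := star U *ᵥ x with hy
  have h1 : star x ⬝ᵥ M *ᵥ x = star y ⬝ᵥ (diagonal (RCLike.ofReal ∘ hM.eigenvalues)) *ᵥ y := by
    conv_lhs => rw [hM.spectral_theorem, Unitary.conjStarAlgAut_apply]
    rw [← mulVec_mulVec, ← mulVec_mulVec, dotProduct_mulVec]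
    congr 1
    rw [hy, star_mulVec]
    rw [star_eq_conjTranspose, conjTranspose_conjTranspose]
  rw [qre, h1, dotProduct]
  rw [Complex.re_sum]
  refine Finset.sum_congr rfl fun i _ => ?_
  rw [mulVec_diagonal]
  have : (star y) i * ((RCLike.ofReal ∘ hM.eigenvalues) i * y i)
      = (hM.eigenvalues i : ℂ) * ((starRingEnd ℂ) (y i) * y i) := by
    simp [Function.comp]; ring
  rw [this, mul_comm ((starRingEnd ℂ) (y i)) (y i), Complex.mul_conj]
  rw [← Complex.ofReal_mul, Complex.ofReal_re]

lemma exists_pos_subspace {M : Matrix n n ℂ} (hM : M.IsHermitian) :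
    ∃ V : Submodule ℂ (n → ℂ), posIdx hM ≤ Module.finrank ℂ V ∧
      ∀ x ∈ V, x ≠ 0 → 0 < qre M x := by
  classical
  set U : Matrix n n ℂ := (hM.eigenvectorUnitary : Matrix n n ℂ) with hUdef
  let L : (n → ℂ) →ₗ[ℂ] ({i : n // ¬ 0 < hM.eigenvalues i} → ℂ) :=
    { toFun := fun x j => (star U *ᵥ x) j.1
      map_add' := by intro x y; funext j; simp [Matrix.mulVec_add]
      map_smul' := by intro c x; funext j; simp [Matrix.mulVec_smul]  }
  refine ⟨LinearMap.ker L, ?_, ?_⟩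
  · have h1 := LinearMap.finrank_range_add_finrank_ker L
    have h2 : Module.finrank ℂ (LinearMap.range L) ≤
        Fintype.card {i : n // ¬ 0 < hM.eigenvalues i} := by
      simpa [Module.finrank_fintype_fun_eq_card] using
        (Submodule.finrank_le (LinearMap.range L))
    have h3 : Fintype.card {i : n // ¬ 0 < hM.eigenvalues i}
        = Fintype.card n - Fintype.card {i : n // 0 < hM.eigenvalues i} :=
      Fintype.card_subtype_compl _
    have h4 : Fintype.card {i : n // 0 < hM.eigenvalues i} ≤ Fintype.card n :=
      Fintype.card_subtype_le _
    rw [Module.finrank_fintype_fun_eq_card] at h1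
    unfold posIdx
    omega
  · intro x hx hx0
    set y : n → ℂ := star U *ᵥ x with hy
    have hyz : ∀ i : n, ¬ 0 < hM.eigenvalues i → y i = 0 := by
      intro i hi
      have := congrFun (LinearMap.mem_ker.mp hx) ⟨i, hi⟩
      exact this
    have hUy : U *ᵥ y = x := by
      rw [hy, mulVec_mulVec, (Matrix.mem_unitaryGroup_iff).mp hM.eigenvectorUnitary.2,
        one_mulVec]
    have hy0 : y ≠ 0 := by
      intro h
      rw [h, mulVec_zero] at hUy
      exact hx0 hUy.symm
    obtain ⟨i0, hi0⟩ : ∃ i, y i ≠ 0 := by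
      by_contra h
      push_neg at h
      exact hy0 (funext h)
    have hpos : 0 < hM.eigenvalues i0 := by
      by_contra h
      exact hi0 (hyz i0 h)
    rw [qre_eq hM]
    refine Finset.sum_pos' (fun i _ => ?_) ⟨i0, Finset.mem_univ _, ?_⟩
    · by_cases h : 0 < hM.eigenvalues i
      · exact mul_nonneg h.le (Complex.normSq_nonneg _)
      · have h0 : (star (hM.eigenvectorUnitary : Matrix n n ℂ) *ᵥ x) i = 0 := hyz i h
        rw [h0]; simp
    · exact mul_pos hpos (by simpa [Complex.normSq_pos] using hi0)

lemma exists_nonpos_subspace {M : Matrix n n ℂ} (hM : M.IsHermitian) :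
    ∃ W : Submodule ℂ (n → ℂ), Fintype.card n ≤ Module.finrank ℂ W + posIdx hM ∧
      ∀ x ∈ W, qre M x ≤ 0 := by
  classical
  set U : Matrix n n ℂ := (hM.eigenvectorUnitary : Matrix n n ℂ) with hUdef
  let L : (n → ℂ) →ₗ[ℂ] ({i : n // 0 < hM.eigenvalues i} → ℂ) :=
    { toFun := fun x j => (star U *ᵥ x) j.1
      map_add' := by intro x y; funext j; simp [Matrix.mulVec_add]
      map_smul' := by intro c x; funext j; simp [Matrix.mulVec_smul]  }
  refine ⟨LinearMap.ker L, ?_, ?_⟩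
  · have h1 := LinearMap.finrank_range_add_finrank_ker L
    have h2 : Module.finrank ℂ (LinearMap.range L) ≤
        Fintype.card {i : n // 0 < hM.eigenvalues i} := by
      simpa [Module.finrank_fintype_fun_eq_card] using
        (Submodule.finrank_le (LinearMap.range L))
    rw [Module.finrank_fintype_fun_eq_card] at h1
    unfold posIdx
    omega
  · intro x hx
    set y : n → ℂ := star U *ᵥ x with hy
    have hyz : ∀ i : n, 0 < hM.eigenvalues i → y i = 0 := by
      intro i hi
      have := congrFun (LinearMap.mem_ker.mp hx) ⟨i, hi⟩
      exact this
    rw [qre_eq hM]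
    refine Finset.sum_nonpos fun i _ => ?_
    by_cases h : 0 < hM.eigenvalues i
    · have h0 : (star (hM.eigenvectorUnitary : Matrix n n ℂ) *ᵥ x) i = 0 := hyz i h
      rw [h0]; simp
    · exact mul_nonpos_of_nonpos_of_nonneg (not_lt.mp h) (Complex.normSq_nonneg _)

omit [DecidableEq n] in
lemma pos_add_nonpos_le {M : Matrix n n ℂ} {V W : Submodule ℂ (n → ℂ)}
    (hV : ∀ x ∈ V, x ≠ 0 → 0 < qre M x) (hW : ∀ x ∈ W, qre M x ≤ 0) :
    Module.finrank ℂ V + Module.finrank ℂ W ≤ Fintype.card n := by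
  have hdisj : V ⊓ W = ⊥ := by
    rw [Submodule.eq_bot_iff]
    intro x hx
    by_contra h
    exact absurd (hV x hx.1 h) (not_lt.2 (hW x hx.2))
  have h1 := Submodule.finrank_sup_add_finrank_inf_eq V W
  rw [hdisj, finrank_bot] at h1
  have h2 : Module.finrank ℂ ↥(V ⊔ W) ≤ Fintype.card n := by
    simpa [Module.finrank_fintype_fun_eq_card] using Submodule.finrank_le (V ⊔ W)
  omega

lemma finrank_le_posIdx {M : Matrix n n ℂ} (hM : M.IsHermitian) {V : Submodule ℂ (n → ℂ)}
    (hV : ∀ x ∈ V, x ≠ 0 → 0 < qre M x) : Module.finrank ℂ V ≤ posIdx hM := by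
  obtain ⟨W, hW1, hW2⟩ := exists_nonpos_subspace hM
  have := pos_add_nonpos_le hV hW2
  omega

lemma posIdx_add_le {M : Matrix n n ℂ} (hM : M.IsHermitian) {W : Submodule ℂ (n → ℂ)}
    (hW : ∀ x ∈ W, qre M x ≤ 0) : posIdx hM + Module.finrank ℂ W ≤ Fintype.card n := by
  obtain ⟨V, hV1, hV2⟩ := exists_pos_subspace hM
  have := pos_add_nonpos_le hV2 hW
  omega

/-- A submodule of a product is linearly equivalent to the product of submodules. -/
def submodProdEquiv {R M N : Type*} [Ring R] [AddCommGroup M] [AddCommGroup N]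
    [Module R M] [Module R N] (p : Submodule R M) (q : Submodule R N) :
    ↥(p.prod q) ≃ₗ[R] ↥p × ↥q where
  toFun x := (⟨x.1.1, x.2.1⟩, ⟨x.1.2, x.2.2⟩)
  invFun x := ⟨(x.1.1, x.2.1), ⟨x.1.2, x.2.2⟩⟩
  left_inv _ := rfl
  right_inv _ := rfl
  map_add' _ _ := rfl
  map_smul' _ _ := rfl

lemma finrank_submod_prod {R M N : Type*} [DivisionRing R] [AddCommGroup M] [AddCommGroup N]
    [Module R M] [Module R N] (p : Submodule R M) (q : Submodule R N)
    [Module.Finite R p] [Module.Finite R q] :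
    Module.finrank R ↥(p.prod q) = Module.finrank R ↥p + Module.finrank R ↥q := by
  rw [(submodProdEquiv p q).finrank_eq, Module.finrank_prod]

variable {m p : Type*} [Fintype m] [Fintype p]

/-- Embedding of the `M̃₁` index set into the glued index set. -/
def e1 : m ⊕ Unit → m ⊕ Unit ⊕ p := Sum.elim Sum.inl (fun _ => Sum.inr (Sum.inl ()))

/-- Embedding of the `M̃₂` index set into the glued index set. -/
def e2 : Unit ⊕ p → m ⊕ Unit ⊕ p := Sum.elim (fun _ => Sum.inr (Sum.inl ())) (Sum.inr ∘ Sum.inr)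

lemma cut_split (A : Matrix m m ℂ) (B : Matrix p p ℂ) (α : m → ℂ) (β : p → ℂ)
    (x : m ⊕ Unit ⊕ p → ℂ) :
    star x ⬝ᵥ (cutBlock A B α β) *ᵥ x
      = star (x ∘ e1) ⬝ᵥ (borderR A α) *ᵥ (x ∘ e1)
        + star (x ∘ e2) ⬝ᵥ (borderL B β) *ᵥ (x ∘ e2) := by
  simp only [dotProduct, mulVec, Fintype.sum_sum_type, cutBlock, borderR, borderL,
    Function.comp, e1, e2, Sum.elim_inl, Sum.elim_inr, Pi.star_apply,
    Finset.univ_unique, Finset.sum_singleton, PUnit.default_eq_unit,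
    zero_mul, mul_zero, Finset.sum_const_zero, add_zero, zero_add, mul_add]
  ring

lemma embed_split (A : Matrix m m ℂ) (B : Matrix p p ℂ) (α : m → ℂ) (β : p → ℂ)
    (a : m → ℂ) (b : p → ℂ) :
    star (Sum.elim a (Sum.elim 0 b)) ⬝ᵥ (cutBlock A B α β) *ᵥ (Sum.elim a (Sum.elim 0 b))
      = star a ⬝ᵥ A *ᵥ a + star b ⬝ᵥ B *ᵥ b := by
  simp only [dotProduct, mulVec, Fintype.sum_sum_type, cutBlock,
    Sum.elim_inl, Sum.elim_inr, Pi.star_apply, Pi.zero_apply, star_zero, zero_mul, mul_zero,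
    Finset.univ_unique, Finset.sum_singleton, Finset.sum_const_zero, add_zero, zero_add]

lemma qre_cut_split (A : Matrix m m ℂ) (B : Matrix p p ℂ) (α : m → ℂ) (β : p → ℂ)
    (x : m ⊕ Unit ⊕ p → ℂ) :
    qre (cutBlock A B α β) x = qre (borderR A α) (x ∘ e1) + qre (borderL B β) (x ∘ e2) := by
  unfold qre
  rw [cut_split, Complex.add_re]

lemma qre_embed_split (A : Matrix m m ℂ) (B : Matrix p p ℂ) (α : m → ℂ) (β : p → ℂ)
    (a : m → ℂ) (b : p → ℂ) :
    qre (cutBlock A B α β) (Sum.elim a (Sum.elim 0 b)) = qre A a + qre B b := by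
  unfold qre
  rw [embed_split, Complex.add_re]

end PosIdxAux

open Complex in
/-- For the one-point identification `G̃ = M̃₁ • v • M̃₂` of two mixed graphs,
`p(M̃₁ - v') + p(M̃₂ - v'') ≤ p(G̃) ≤ p(M̃₁) + p(M̃₂)`. -/
theorem posIdx_vertex_identification {m p : Type*}
    [Fintype m] [DecidableEq m] [Fintype p] [DecidableEq p]
    (A : Matrix m m ℂ) (B : Matrix p p ℂ) (α : m → ℂ) (β : p → ℂ)
    (hA : A.IsHermitian) (hB : B.IsHermitian)
    (hM1mix : IsMixedAdj (borderR A α)) (hM2mix : IsMixedAdj (borderL B β))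
    (hM1 : (borderR A α).IsHermitian) (hM2 : (borderL B β).IsHermitian)
    (hG : (cutBlock A B α β).IsHermitian) :
    posIdx hA + posIdx hB ≤ posIdx hG ∧ posIdx hG ≤ posIdx hM1 + posIdx hM2 := by
  classical
  open PosIdxAux in
  constructor
  · -- lower bound
    obtain ⟨V1, hV1r, hV1p⟩ := PosIdxAux.exists_pos_subspace hA
    obtain ⟨V2, hV2r, hV2p⟩ := PosIdxAux.exists_pos_subspace hB
    let S : ((m → ℂ) × (p → ℂ)) →ₗ[ℂ] (m ⊕ Unit ⊕ p → ℂ) :=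
      { toFun := fun z => Sum.elim z.1 (Sum.elim 0 z.2)
        map_add' := by
          intro u v; funext i; rcases i with i | i | i <;> simp
        map_smul' := by
          intro c u; funext i; rcases i with i | i | i <;> simp }
    have hSinj : Function.Injective S := by
      rw [← LinearMap.ker_eq_bot, Submodule.eq_bot_iff]
      rintro ⟨a, b⟩ hz
      have h0 : Sum.elim a (Sum.elim 0 b) = 0 := hz
      have ha : a = 0 := funext fun i => congrFun h0 (Sum.inl i)
      have hb : b = 0 := funext fun j => congrFun h0 (Sum.inr (Sum.inr j))
      simp [Prod.ext_iff, ha, hb]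
    set V : Submodule ℂ (m ⊕ Unit ⊕ p → ℂ) := Submodule.map S (V1.prod V2) with hVdef
    have hVr : Module.finrank ℂ V
        = Module.finrank ℂ V1 + Module.finrank ℂ V2 := by
      rw [hVdef, ← (Submodule.equivMapOfInjective S hSinj (V1.prod V2)).finrank_eq,
        PosIdxAux.finrank_submod_prod]
    have hVpos : ∀ x ∈ V, x ≠ 0 → 0 < PosIdxAux.qre (cutBlock A B α β) x := by
      rintro x hx hx0
      obtain ⟨⟨a, b⟩, hzmem, rfl⟩ := Submodule.mem_map.mp hx
      obtain ⟨haV, hbV⟩ := Submodule.mem_prod.mp hzmem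
      have hq : PosIdxAux.qre (cutBlock A B α β) (S (a, b))
          = PosIdxAux.qre A a + PosIdxAux.qre B b :=
        PosIdxAux.qre_embed_split A B α β a b
      rw [hq]
      by_cases ha0 : a = 0
      · have hb0 : b ≠ 0 := by
          intro hb0
          exact hx0 (by simp [S, ha0, hb0, Prod.ext_iff])
        have hq2 := hV2p b hbV hb0
        have hz : PosIdxAux.qre A a = 0 := by rw [ha0]; simp
        linarith
      · have h1 := hV1p a haV ha0
        have h2 : 0 ≤ PosIdxAux.qre B b := by
          by_cases hb0 : b = 0
          · simp [hb0]
          · exact (hV2p b hbV hb0).le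
        linarith
    have hfin := PosIdxAux.finrank_le_posIdx hG hVpos
    omega
  · -- upper bound
    obtain ⟨W1, hW1r, hW1n⟩ := PosIdxAux.exists_nonpos_subspace hM1
    obtain ⟨W2, hW2r, hW2n⟩ := PosIdxAux.exists_nonpos_subspace hM2
    let T : (m ⊕ Unit ⊕ p → ℂ) →ₗ[ℂ] ((m ⊕ Unit → ℂ) × (Unit ⊕ p → ℂ)) :=
      (LinearMap.funLeft ℂ ℂ (PosIdxAux.e1)).prod (LinearMap.funLeft ℂ ℂ (PosIdxAux.e2))
    set W : Submodule ℂ (m ⊕ Unit ⊕ p → ℂ) := Submodule.comap T (W1.prod W2) with hWdef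
    have hWn : ∀ x ∈ W, PosIdxAux.qre (cutBlock A B α β) x ≤ 0 := by
      intro x hx
      obtain ⟨h1, h2⟩ := Submodule.mem_prod.mp (Submodule.mem_comap.mp hx)
      have hq := PosIdxAux.qre_cut_split A B α β x
      rw [hq]
      have hq1 : PosIdxAux.qre (borderR A α) (x ∘ PosIdxAux.e1) ≤ 0 := hW1n _ h1
      have hq2 : PosIdxAux.qre (borderL B β) (x ∘ PosIdxAux.e2) ≤ 0 := hW2n _ h2
      linarith
    have hmain := PosIdxAux.posIdx_add_le hG hWn
    -- rank-nullity to bound finrank W from below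
    let f := ((W1.prod W2).mkQ).comp T
    have hker : LinearMap.ker f = W := by
      rw [hWdef]
      show LinearMap.ker (((W1.prod W2).mkQ).comp T) = _
      rw [LinearMap.ker_comp, Submodule.ker_mkQ]
    have h1 := LinearMap.finrank_range_add_finrank_ker f
    rw [hker] at h1
    have h2 : Module.finrank ℂ (LinearMap.range f)
        ≤ Module.finrank ℂ (((m ⊕ Unit → ℂ) × (Unit ⊕ p → ℂ)) ⧸ (W1.prod W2)) :=
      Submodule.finrank_le _
    have h3 := Submodule.finrank_quotient_add_finrank (W1.prod W2)
    rw [PosIdxAux.finrank_submod_prod] at h3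
    have h4 : Module.finrank ℂ ((m ⊕ Unit → ℂ) × (Unit ⊕ p → ℂ))
        = Fintype.card (m ⊕ Unit) + Fintype.card (Unit ⊕ p) := by
      rw [Module.finrank_prod, Module.finrank_fintype_fun_eq_card,
        Module.finrank_fintype_fun_eq_card]
    have h5 : Module.finrank ℂ (m ⊕ Unit ⊕ p → ℂ) = Fintype.card (m ⊕ Unit ⊕ p) :=
      Module.finrank_fintype_fun_eq_card ℂ
    have hc1 : Fintype.card (m ⊕ Unit ⊕ p) = Fintype.card m + 1 + Fintype.card p := by
      simp [Fintype.card_sum]; omega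
    have hc2 : Fintype.card (m ⊕ Unit) = Fintype.card m + 1 := by simp
    have hc3 : Fintype.card (Unit ⊕ p) = 1 + Fintype.card p := by simp
    omega
end

section
/- Let v be a cut vertex of a mixed graph G̃ with components G̃₁,…,G̃_l of G̃ - v. If some component G̃_i satisfies rk(G̃_i + v) = rk(G̃_i) + 2, then p(G̃) = Σ_j p(G̃_j) + 1, n(G̃) = Σ_j n(G̃_j) + 1, and η(G̃) = Σ_j η(G̃_j) - 1. -/
/-- The Hermitian adjacency matrix of a mixed graph with a cut vertex `v` (encoded as
`none`) whose removal leaves components with Hermitian adjacency matrices `A i` and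
edges `α i` from `v` to the `i`-th component. -/
def cutVertexAdj {l : ℕ} (m : Fin l → Type*) [∀ i, Fintype (m i)] [∀ i, DecidableEq (m i)]
    (A : ∀ i, Matrix (m i) (m i) ℂ) (α : ∀ i, m i → ℂ) :
    Matrix (Option (Σ i, m i)) (Option (Σ i, m i)) ℂ :=
  fun x y => match x, y with
  | none, none => 0
  | none, some ⟨i, a⟩ => star (α i a)
  | some ⟨i, a⟩, none => α i a
  | some ⟨i, a⟩, some ⟨j, b⟩ => if h : j = i then A i a (h ▸ b) else 0

/-- The Hermitian adjacency matrix of `G̃_i + v`: the component `A` bordered by the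
vector `α` of edges to the cut vertex. -/
def borderOne {μ : Type*} (A : Matrix μ μ ℂ) (α : μ → ℂ) :
    Matrix (Option μ) (Option μ) ℂ :=
  fun x y => match x, y with
  | none, none => 0
  | none, some j => star (α j)
  | some i, none => α i
  | some i, some j => A i j

open Matrix Complex Module

section Core

variable {n : Type*} [Fintype n] [DecidableEq n] {M : Matrix n n ℂ} (hM : M.IsHermitian)

/-- Extension by zero of coordinates indexed by a subtype. -/
def subExt (P : n → Prop) [DecidablePred P] : ({i // P i} → ℂ) →ₗ[ℂ] (n → ℂ) where
  toFun c := fun i => if h : P i then c ⟨i, h⟩ else 0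
  map_add' c d := by funext i; by_cases h : P i <;> simp [h]
  map_smul' r c := by funext i; by_cases h : P i <;> simp [h]

lemma subExt_injective (P : n → Prop) [DecidablePred P] : Function.Injective (subExt (n := n) P) := by
  intro c d h
  funext k
  have := congrFun h k.1
  simpa [subExt, k.2] using this

/-- The span of eigenvectors whose index satisfies `P`, parametrized linearly. -/
noncomputable def eigExt (P : n → Prop) [DecidablePred P] : ({i // P i} → ℂ) →ₗ[ℂ] (n → ℂ) :=
  (mulVecLin (hM.eigenvectorUnitary : Matrix n n ℂ)).comp (subExt P)

lemma eigExt_injective (P : n → Prop) [DecidablePred P] :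
    Function.Injective (eigExt hM P) := by
  intro c d h
  apply subExt_injective P
  have h' : (hM.eigenvectorUnitary : Matrix n n ℂ) *ᵥ subExt P c
      = (hM.eigenvectorUnitary : Matrix n n ℂ) *ᵥ subExt P d := h
  have := congrArg (fun v => (star (hM.eigenvectorUnitary : Matrix n n ℂ)) *ᵥ v) h'
  simpa [mulVec_mulVec, Unitary.coe_star_mul_self] using this

lemma eigExt_mulVec (P : n → Prop) [DecidablePred P] (c : {i // P i} → ℂ) :
    M *ᵥ eigExt hM P c
      = (hM.eigenvectorUnitary : Matrix n n ℂ) *ᵥ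
        (fun i => (hM.eigenvalues i : ℂ) * subExt P c i) := by
  show M *ᵥ ((hM.eigenvectorUnitary : Matrix n n ℂ) *ᵥ subExt P c) = _
  rw [mulVec_mulVec]
  have hMU : M * (hM.eigenvectorUnitary : Matrix n n ℂ)
      = (hM.eigenvectorUnitary : Matrix n n ℂ) * diagonal (RCLike.ofReal ∘ hM.eigenvalues) := by
    have h2 := congrArg (fun X => X * (hM.eigenvectorUnitary : Matrix n n ℂ)) hM.spectral_theorem
    simpa [mul_assoc, Unitary.coe_star_mul_self] using h2
  have hd : diagonal (RCLike.ofReal ∘ hM.eigenvalues) *ᵥ subExt P c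
      = fun i => (hM.eigenvalues i : ℂ) * subExt P c i := by
    funext i; simp [mulVec_diagonal]
  rw [hMU, ← mulVec_mulVec, hd]

lemma unitary_dot (y w : n → ℂ) :
    star ((hM.eigenvectorUnitary : Matrix n n ℂ) *ᵥ y) ⬝ᵥ
      ((hM.eigenvectorUnitary : Matrix n n ℂ) *ᵥ w) = star y ⬝ᵥ w := by
  rw [star_mulVec, ← dotProduct_mulVec, mulVec_mulVec]
  rw [show (hM.eigenvectorUnitary : Matrix n n ℂ)ᴴ = star (hM.eigenvectorUnitary : Matrix n n ℂ) from rfl]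
  rw [Unitary.coe_star_mul_self, one_mulVec]

lemma eigExt_form (P : n → Prop) [DecidablePred P] (c : {i // P i} → ℂ) :
    star (eigExt hM P c) ⬝ᵥ (M *ᵥ eigExt hM P c)
      = ((∑ i, hM.eigenvalues i * Complex.normSq (subExt P c i) : ℝ) : ℂ) := by
  rw [eigExt_mulVec]
  show star ((hM.eigenvectorUnitary : Matrix n n ℂ) *ᵥ subExt P c) ⬝ᵥ _ = _
  rw [unitary_dot]
  rw [dotProduct]
  push_cast
  refine Finset.sum_congr rfl fun i _ => ?_
  rw [Pi.star_apply, show star (subExt P c i) = (starRingEnd ℂ) (subExt P c i) from rfl]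
  rw [show (starRingEnd ℂ) (subExt P c i) * ((hM.eigenvalues i : ℂ) * subExt P c i)
      = (hM.eigenvalues i : ℂ) * (subExt P c i * (starRingEnd ℂ) (subExt P c i)) by ring]
  rw [Complex.mul_conj]

end Core

section Core2

variable {n : Type*} [Fintype n] [DecidableEq n] {M : Matrix n n ℂ} (hM : M.IsHermitian)

lemma eigExt_kernel (P : n → Prop) [DecidablePred P] (hP : ∀ i, P i → hM.eigenvalues i = 0)
    (c : {i // P i} → ℂ) : M *ᵥ eigExt hM P c = 0 := by
  rw [eigExt_mulVec]
  have : (fun i => (hM.eigenvalues i : ℂ) * subExt P c i) = (0 : n → ℂ) := by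
    funext i
    by_cases h : P i
    · simp [hP i h]
    · simp [subExt, h]
  rw [this, mulVec_zero]

/-- Lower bound on the positive inertia index from a linearly embedded positive
definite subspace. -/
lemma le_posIdx_aux {D : Type*} [AddCommGroup D] [Module ℂ D] [FiniteDimensional ℂ D]
    (f : D →ₗ[ℂ] (n → ℂ))
    (hpos : ∀ z : D, z ≠ 0 → 0 < (star (f z) ⬝ᵥ (M *ᵥ f z)).re) :
    finrank ℂ D ≤ Fintype.card {i // 0 < hM.eigenvalues i} := by
  by_contra hlt
  push_neg at hlt
  have hfinj : Function.Injective f := by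
    rw [← LinearMap.ker_eq_bot, eq_bot_iff]
    intro z hz
    rw [LinearMap.mem_ker] at hz
    by_contra hz0
    have := hpos z (by simpa using hz0)
    rw [hz] at this
    simp at this
  set W := LinearMap.range (eigExt hM (fun i => ¬ 0 < hM.eigenvalues i)) with hWdef
  have hWrank : finrank ℂ W = Fintype.card {i // ¬ 0 < hM.eigenvalues i} := by
    rw [hWdef, LinearMap.finrank_range_of_inj (eigExt_injective hM _), finrank_pi]
  have hWcard : Fintype.card {i // ¬ 0 < hM.eigenvalues i}
      = Fintype.card n - Fintype.card {i // 0 < hM.eigenvalues i} :=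
    Fintype.card_subtype_compl _
  have hrange : finrank ℂ (LinearMap.range f) = finrank ℂ D :=
    LinearMap.finrank_range_of_inj hfinj
  have hsup : finrank ℂ ((LinearMap.range f) ⊔ W : Submodule ℂ (n → ℂ)) ≤ Fintype.card n := by
    refine le_trans (Submodule.finrank_le _) ?_
    rw [finrank_pi]
  have hsum := Submodule.finrank_sup_add_finrank_inf_eq (LinearMap.range f) W
  have hple : Fintype.card {i // 0 < hM.eigenvalues i} ≤ Fintype.card n :=
    Fintype.card_subtype_le _
  have hint : 0 < finrank ℂ ((LinearMap.range f) ⊓ W : Submodule ℂ (n → ℂ)) := by omega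
  obtain ⟨z, hz0⟩ := (Module.finrank_pos_iff_exists_ne_zero (R := ℂ)).mp hint
  obtain ⟨hz1, hz2⟩ := z.2
  have hzne : (z : n → ℂ) ≠ 0 := by
    intro h
    exact hz0 (Subtype.ext h)
  obtain ⟨d, hd⟩ := hz1
  obtain ⟨c, hc⟩ := hz2
  have hdne : d ≠ 0 := by
    intro h
    rw [h, map_zero] at hd
    exact hzne hd.symm
  have h1 : 0 < (star (z : n → ℂ) ⬝ᵥ (M *ᵥ (z : n → ℂ))).re := by
    rw [← hd]; exact hpos d hdne
  have h2 : (star (z : n → ℂ) ⬝ᵥ (M *ᵥ (z : n → ℂ))).re ≤ 0 := by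
    rw [← hc, eigExt_form, Complex.ofReal_re]
    refine Finset.sum_nonpos fun i _ => ?_
    by_cases h : 0 < hM.eigenvalues i
    · have : subExt (fun i => ¬ 0 < hM.eigenvalues i) c i = 0 := by simp [subExt, h]
      rw [this]
      simp
    · exact mul_nonpos_of_nonpos_of_nonneg (by linarith [not_lt.mp h]) (Complex.normSq_nonneg _)
  linarith

/-- Lower bound on the negative inertia index. -/
lemma le_negIdx_aux {D : Type*} [AddCommGroup D] [Module ℂ D] [FiniteDimensional ℂ D]
    (f : D →ₗ[ℂ] (n → ℂ))
    (hneg : ∀ z : D, z ≠ 0 → (star (f z) ⬝ᵥ (M *ᵥ f z)).re < 0) :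
    finrank ℂ D ≤ Fintype.card {i // hM.eigenvalues i < 0} := by
  by_contra hlt
  push_neg at hlt
  have hfinj : Function.Injective f := by
    rw [← LinearMap.ker_eq_bot, eq_bot_iff]
    intro z hz
    rw [LinearMap.mem_ker] at hz
    by_contra hz0
    have := hneg z (by simpa using hz0)
    rw [hz] at this
    simp at this
  set W := LinearMap.range (eigExt hM (fun i => ¬ hM.eigenvalues i < 0)) with hWdef
  have hWrank : finrank ℂ W = Fintype.card {i // ¬ hM.eigenvalues i < 0} := by
    rw [hWdef, LinearMap.finrank_range_of_inj (eigExt_injective hM _), finrank_pi]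
  have hWcard : Fintype.card {i // ¬ hM.eigenvalues i < 0}
      = Fintype.card n - Fintype.card {i // hM.eigenvalues i < 0} :=
    Fintype.card_subtype_compl _
  have hrange : finrank ℂ (LinearMap.range f) = finrank ℂ D :=
    LinearMap.finrank_range_of_inj hfinj
  have hsup : finrank ℂ ((LinearMap.range f) ⊔ W : Submodule ℂ (n → ℂ)) ≤ Fintype.card n := by
    refine le_trans (Submodule.finrank_le _) ?_
    rw [finrank_pi]
  have hsum := Submodule.finrank_sup_add_finrank_inf_eq (LinearMap.range f) W
  have hple : Fintype.card {i // hM.eigenvalues i < 0} ≤ Fintype.card n :=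
    Fintype.card_subtype_le _
  have hint : 0 < finrank ℂ ((LinearMap.range f) ⊓ W : Submodule ℂ (n → ℂ)) := by omega
  obtain ⟨z, hz0⟩ := (Module.finrank_pos_iff_exists_ne_zero (R := ℂ)).mp hint
  obtain ⟨hz1, hz2⟩ := z.2
  have hzne : (z : n → ℂ) ≠ 0 := by
    intro h
    exact hz0 (Subtype.ext h)
  obtain ⟨d, hd⟩ := hz1
  obtain ⟨c, hc⟩ := hz2
  have hdne : d ≠ 0 := by
    intro h
    rw [h, map_zero] at hd
    exact hzne hd.symm
  have h1 : (star (z : n → ℂ) ⬝ᵥ (M *ᵥ (z : n → ℂ))).re < 0 := by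
    rw [← hd]; exact hneg d hdne
  have h2 : 0 ≤ (star (z : n → ℂ) ⬝ᵥ (M *ᵥ (z : n → ℂ))).re := by
    rw [← hc, eigExt_form, Complex.ofReal_re]
    refine Finset.sum_nonneg fun i _ => ?_
    by_cases h : hM.eigenvalues i < 0
    · have : subExt (fun i => ¬ hM.eigenvalues i < 0) c i = 0 := by simp [subExt, h]
      rw [this]
      simp
    · exact mul_nonneg (not_lt.mp h) (Complex.normSq_nonneg _)
  linarith

/-- Lower bound on the nullity from a linearly embedded kernel subspace. -/
lemma le_nulIdx_aux {D : Type*} [AddCommGroup D] [Module ℂ D] [FiniteDimensional ℂ D]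
    (f : D →ₗ[ℂ] (n → ℂ)) (hfinj : Function.Injective f)
    (hker : ∀ z : D, M *ᵥ f z = 0) :
    finrank ℂ D ≤ Fintype.card {i // hM.eigenvalues i = 0} := by
  have hle : LinearMap.range f ≤ LinearMap.ker M.mulVecLin := by
    rintro x ⟨d, rfl⟩
    rw [LinearMap.mem_ker, mulVecLin_apply]
    exact hker d
  have h1 : finrank ℂ D ≤ finrank ℂ (LinearMap.ker M.mulVecLin) := by
    rw [← LinearMap.finrank_range_of_inj hfinj]
    exact Submodule.finrank_mono hle
  have h2 := LinearMap.finrank_range_add_finrank_ker M.mulVecLin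
  rw [finrank_pi] at h2
  have h3 : M.rank = Fintype.card {i // hM.eigenvalues i ≠ 0} :=
    hM.rank_eq_card_non_zero_eigs
  have h4 : M.rank = finrank ℂ (LinearMap.range M.mulVecLin) := rfl
  have h5 : Fintype.card {i // hM.eigenvalues i = 0}
      = Fintype.card n - Fintype.card {i // hM.eigenvalues i ≠ 0} := by
    rw [← Fintype.card_subtype_compl]
    exact Fintype.card_congr (Equiv.subtypeEquivRight (by simp))
  have h6 : Fintype.card {i // hM.eigenvalues i ≠ 0} ≤ Fintype.card n :=
    Fintype.card_subtype_le _
  omega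

/-- Every kernel vector is in the span of null eigenvectors. -/
lemma exists_eigExt_eq {x : n → ℂ} (hx : M *ᵥ x = 0) :
    ∃ c, eigExt hM (fun i => hM.eigenvalues i = 0) c = x := by
  set P := fun i => hM.eigenvalues i = 0 with hP
  have hle : LinearMap.range (eigExt hM P) ≤ LinearMap.ker M.mulVecLin := by
    rintro y ⟨c, rfl⟩
    rw [LinearMap.mem_ker, mulVecLin_apply]
    exact eigExt_kernel hM P (fun i h => h) c
  have heq : LinearMap.range (eigExt hM P) = LinearMap.ker M.mulVecLin := by
    apply Submodule.eq_of_le_of_finrank_le hle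
    have h1 : finrank ℂ (LinearMap.range (eigExt hM P)) = Fintype.card {i // P i} := by
      rw [LinearMap.finrank_range_of_inj (eigExt_injective hM _), finrank_pi]
    have h2 := LinearMap.finrank_range_add_finrank_ker M.mulVecLin
    rw [finrank_pi] at h2
    have h3 : M.rank = Fintype.card {i // hM.eigenvalues i ≠ 0} :=
      hM.rank_eq_card_non_zero_eigs
    have h4 : M.rank = finrank ℂ (LinearMap.range M.mulVecLin) := rfl
    have h5 : Fintype.card {i // P i}
        = Fintype.card n - Fintype.card {i // hM.eigenvalues i ≠ 0} := by
      rw [← Fintype.card_subtype_compl]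
      exact Fintype.card_congr (Equiv.subtypeEquivRight (by simp [hP]))
    have h6 : Fintype.card {i // hM.eigenvalues i ≠ 0} ≤ Fintype.card n :=
      Fintype.card_subtype_le _
    omega
  have : x ∈ LinearMap.range (eigExt hM P) := by
    rw [heq, LinearMap.mem_ker, mulVecLin_apply]
    exact hx
  exact this

/-- The inertia indices sum to the dimension. -/
lemma idx_sum :
    Fintype.card {i // 0 < hM.eigenvalues i} + Fintype.card {i // hM.eigenvalues i < 0}
      + Fintype.card {i // hM.eigenvalues i = 0} = Fintype.card n := by
  have hdisj : Disjoint (fun i => 0 < hM.eigenvalues i) (fun i => hM.eigenvalues i < 0) := by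
    intro r h1 h2 i hi
    exact absurd (h2 i hi) (not_lt.mpr (le_of_lt (h1 i hi)))
  have h1 := Fintype.card_subtype_or_disjoint _ _ hdisj
  have h2 : Fintype.card {i // 0 < hM.eigenvalues i ∨ hM.eigenvalues i < 0}
      = Fintype.card {i // hM.eigenvalues i ≠ 0} := by
    apply Fintype.card_congr
    apply Equiv.subtypeEquivRight
    intro i
    constructor
    · rintro (h | h) <;> [exact ne_of_gt h; exact ne_of_lt h]
    · intro h
      rcases lt_trichotomy (hM.eigenvalues i) 0 with h' | h' | h'
      · exact Or.inr h'
      · exact absurd h' h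
      · exact Or.inl h'
  have h3 : Fintype.card {i // hM.eigenvalues i = 0}
      = Fintype.card n - Fintype.card {i // hM.eigenvalues i ≠ 0} := by
    rw [← Fintype.card_subtype_compl]
    exact Fintype.card_congr (Equiv.subtypeEquivRight (by simp))
  have h4 : Fintype.card {i // hM.eigenvalues i ≠ 0} ≤ Fintype.card n :=
    Fintype.card_subtype_le _
  omega

end Core2

section Border

variable {μ : Type*} [Fintype μ] [DecidableEq μ]

/-- Extension of a vector by a zero coordinate at `none`. -/
def optExt : (μ → ℂ) →ₗ[ℂ] (Option μ → ℂ) where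
  toFun x := fun o => Option.elim o 0 x
  map_add' x y := by funext o; cases o <;> simp
  map_smul' r x := by funext o; cases o <;> simp

lemma exists_ker_vec {A : Matrix μ μ ℂ} {α : μ → ℂ}
    (h : (borderOne A α).rank = A.rank + 2) :
    ∃ x, A *ᵥ x = 0 ∧ star α ⬝ᵥ x = 1 := by
  by_contra hcon
  push_neg at hcon
  have hker : ∀ x, A *ᵥ x = 0 → star α ⬝ᵥ x = 0 := by
    intro x hx
    by_contra hne
    refine hcon ((star α ⬝ᵥ x)⁻¹ • x) ?_ ?_
    · rw [mulVec_smul, hx, smul_zero]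
    · rw [dotProduct_smul, smul_eq_mul, inv_mul_cancel₀ hne]
  have hmap : ∀ x ∈ LinearMap.ker A.mulVecLin,
      optExt x ∈ LinearMap.ker (borderOne A α).mulVecLin := by
    intro x hx
    rw [LinearMap.mem_ker, mulVecLin_apply] at *
    funext o
    cases o with
    | none =>
      show (∑ y, borderOne A α none y * optExt x y) = 0
      rw [Fintype.sum_option]
      simpa [borderOne, optExt, dotProduct] using hker x hx
    | some b =>
      show (∑ y, borderOne A α (some b) y * optExt x y) = 0
      rw [Fintype.sum_option]
      have : (∑ a, borderOne A α (some b) (some a) * optExt x (some a)) = (A *ᵥ x) b := by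
        simp [borderOne, optExt, mulVec, dotProduct]
      simp only [borderOne, optExt]
      simpa [this, borderOne, optExt, mulVec, dotProduct] using congrFun hx b
  have hle : finrank ℂ (LinearMap.ker A.mulVecLin)
      ≤ finrank ℂ (LinearMap.ker (borderOne A α).mulVecLin) := by
    have hinj : Function.Injective
        ((optExt.comp (LinearMap.ker A.mulVecLin).subtype).codRestrict _
          (fun x => hmap x.1 x.2)) := by
      intro x y hxy
      have h' : optExt (x : μ → ℂ) = optExt (y : μ → ℂ) := by
        have := congrArg Subtype.val hxy
        exact this
      apply Subtype.ext
      funext a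
      exact congrFun h' (some a)
    exact LinearMap.finrank_le_finrank_of_injective hinj
  have h1 := LinearMap.finrank_range_add_finrank_ker (borderOne A α).mulVecLin
  have h2 := LinearMap.finrank_range_add_finrank_ker A.mulVecLin
  rw [finrank_pi, Fintype.card_option] at h1
  rw [finrank_pi] at h2
  have h3 : (borderOne A α).rank = finrank ℂ (LinearMap.range (borderOne A α).mulVecLin) := rfl
  have h4 : A.rank = finrank ℂ (LinearMap.range A.mulVecLin) := rfl
  omega

end Border

section Cut

variable {l : ℕ} (m : Fin l → Type*) [∀ i, Fintype (m i)] [∀ i, DecidableEq (m i)]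

/-- Assembling a coordinate at the cut vertex and vectors on the components into a
single vector. -/
def zmap : (ℂ × (∀ j, m j → ℂ)) →ₗ[ℂ] (Option (Σ j, m j) → ℂ) where
  toFun p := fun o => Option.elim o p.1 (fun s => p.2 s.1 s.2)
  map_add' p q := by funext o; cases o <;> simp
  map_smul' r p := by funext o; cases o <;> simp

@[simp] lemma zmap_none (p : ℂ × (∀ j, m j → ℂ)) : zmap m p none = p.1 := rfl

@[simp] lemma zmap_some (p : ℂ × (∀ j, m j → ℂ)) (s : Σ j, m j) :
    zmap m p (some s) = p.2 s.1 s.2 := rfl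

variable (A : ∀ i, Matrix (m i) (m i) ℂ) (α : ∀ i, m i → ℂ)

/-- The total pairing of the cut vertex row with a family of component vectors. -/
noncomputable def phiv : (∀ j, m j → ℂ) →ₗ[ℂ] ℂ where
  toFun w := ∑ j, star (α j) ⬝ᵥ w j
  map_add' w z := by
    simp only [Pi.add_apply, dotProduct_add]
    rw [Finset.sum_add_distrib]
  map_smul' r w := by
    simp only [Pi.smul_apply, dotProduct_smul, RingHom.id_apply, smul_eq_mul, Finset.mul_sum]

lemma phiv_single [DecidableEq (Fin l)] (i : Fin l) (y : m i → ℂ) :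
    phiv m α (Pi.single i y) = star (α i) ⬝ᵥ y := by
  show (∑ j, star (α j) ⬝ᵥ (Pi.single i y : ∀ j, m j → ℂ) j) = _
  rw [Finset.sum_eq_single i]
  · rw [Pi.single_eq_same]
  · intro b _ hb
    rw [Pi.single_eq_of_ne hb]
    simp [dotProduct]
  · intro h
    exact absurd (Finset.mem_univ i) h

lemma cut_mulVec (t : ℂ) (w : ∀ j, m j → ℂ) :
    cutVertexAdj m A α *ᵥ (zmap m (t, w))
      = zmap m (∑ j, star (α j) ⬝ᵥ w j, fun j b => t * α j b + (A j *ᵥ w j) b) := by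
  funext o
  cases o with
  | none =>
    show (∑ y, cutVertexAdj m A α none y * zmap m (t, w) y) = ∑ j, star (α j) ⬝ᵥ w j
    rw [Fintype.sum_option, ← Finset.univ_sigma_univ, Finset.sum_sigma]
    simp [cutVertexAdj, zmap, dotProduct]
  | some s =>
    obtain ⟨j, b⟩ := s
    show (∑ y, cutVertexAdj m A α (some ⟨j, b⟩) y * zmap m (t, w) y)
        = t * α j b + (A j *ᵥ w j) b
    rw [Fintype.sum_option, ← Finset.univ_sigma_univ, Finset.sum_sigma]
    have hsum : ∀ k, (∑ c, cutVertexAdj m A α (some ⟨j, b⟩) (some ⟨k, c⟩) * w k c)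
        = if k = j then (A j *ᵥ w j) b else 0 := by
      intro k
      by_cases hk : k = j
      · subst hk
        have he : ∀ c, cutVertexAdj m A α (some ⟨k, b⟩) (some ⟨k, c⟩) = A k b c := by
          intro c
          show (if h : k = k then A k b (h ▸ c) else 0) = A k b c
          rw [dif_pos rfl]
        simp [he, mulVec, dotProduct]
      · have he : ∀ c, cutVertexAdj m A α (some ⟨j, b⟩) (some ⟨k, c⟩) = 0 := by
          intro c
          show (if h : k = j then A j b (h ▸ c) else 0) = 0
          rw [dif_neg hk]
        simp [he, hk]
    simp only [zmap_none, zmap_some]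
    rw [Finset.sum_congr rfl (fun k _ => hsum k), Finset.sum_ite_eq' Finset.univ j]
    have hme : cutVertexAdj m A α (some ⟨j, b⟩) none = α j b := rfl
    rw [hme]
    simp [mul_comm]

lemma zmap_dot (t t' : ℂ) (w w' : ∀ j, m j → ℂ) :
    star (zmap m (t, w)) ⬝ᵥ zmap m (t', w')
      = star t * t' + ∑ j, star (w j) ⬝ᵥ w' j := by
  show (∑ o, star (zmap m (t, w)) o * zmap m (t', w') o) = _
  rw [Fintype.sum_option, ← Finset.univ_sigma_univ, Finset.sum_sigma]
  simp only [Pi.star_apply, zmap_none, zmap_some]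
  simp [dotProduct]

lemma star_phiv (w : ∀ j, m j → ℂ) :
    star (phiv m α w) = ∑ j, star (w j) ⬝ᵥ α j := by
  show star (∑ j, star (α j) ⬝ᵥ w j) = _
  rw [star_sum]
  refine Finset.sum_congr rfl fun j _ => ?_
  simp [dotProduct, star_sum, mul_comm]

lemma cut_form (t : ℂ) (w : ∀ j, m j → ℂ) :
    star (zmap m (t, w)) ⬝ᵥ (cutVertexAdj m A α *ᵥ zmap m (t, w))
      = star t * phiv m α w + t * star (phiv m α w)
        + ∑ j, star (w j) ⬝ᵥ (A j *ᵥ w j) := by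
  rw [cut_mulVec, zmap_dot]
  have hφ : phiv m α w = ∑ j, star (α j) ⬝ᵥ w j := rfl
  have hsplit : ∀ j, star (w j) ⬝ᵥ (fun b => t * α j b + (A j *ᵥ w j) b)
      = t * (star (w j) ⬝ᵥ α j) + star (w j) ⬝ᵥ (A j *ᵥ w j) := by
    intro j
    simp only [dotProduct, Pi.star_apply, Finset.mul_sum]
    rw [← Finset.sum_add_distrib]
    refine Finset.sum_congr rfl fun b _ => ?_
    ring
  rw [Finset.sum_congr rfl (fun j _ => hsplit j), Finset.sum_add_distrib, ← Finset.mul_sum,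
    ← star_phiv m α w, ← hφ]
  ring

lemma herm_cross {μ : Type*} [Fintype μ] {A : Matrix μ μ ℂ} (hA : A.IsHermitian)
    {x : μ → ℂ} (hx : A *ᵥ x = 0) (y : μ → ℂ) (s : ℂ) :
    star (y + s • x) ⬝ᵥ (A *ᵥ (y + s • x)) = star y ⬝ᵥ (A *ᵥ y) := by
  have h1 : star x ⬝ᵥ (A *ᵥ y) = 0 := by
    rw [dotProduct_mulVec, show star x ᵥ* A = star x ᵥ* Aᴴ by rw [hA.eq],
      ← star_mulVec, hx]
    simp
  have h2 : star y ⬝ᵥ (A *ᵥ x) = 0 := by rw [hx]; simp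
  rw [mulVec_add, mulVec_smul, hx, smul_zero, add_zero, star_add, star_smul,
    add_dotProduct, smul_dotProduct, h1]
  simp

end Cut

section FMapSec

variable {l : ℕ} (m : Fin l → Type*) [∀ i, Fintype (m i)] [∀ i, DecidableEq (m i)]
  (A : ∀ i, Matrix (m i) (m i) ℂ) (α : ∀ i, m i → ℂ)

/-- The family of eigenvector-span parametrizations, one for each component. -/
noncomputable def LcMap (hA : ∀ i, (A i).IsHermitian) (P : ∀ j, m j → Prop)
    [∀ j, DecidablePred (P j)] : (∀ j, {k // P j k} → ℂ) →ₗ[ℂ] (∀ j, m j → ℂ) :=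
  LinearMap.pi fun j => (eigExt (hA j) (P j)).comp (LinearMap.proj j)

lemma LcMap_apply (hA : ∀ i, (A i).IsHermitian) (P : ∀ j, m j → Prop)
    [∀ j, DecidablePred (P j)] (c : ∀ j, {k // P j k} → ℂ) (j : Fin l) :
    LcMap m A hA P c j = eigExt (hA j) (P j) (c j) := rfl

/-- The embedding of `ℂ ⊕ (⊕ⱼ eigenspaces)` into vectors on the whole graph used for
the positive/negative inertia bounds. -/
noncomputable def FMap (hA : ∀ i, (A i).IsHermitian) (P : ∀ j, m j → Prop)
    [∀ j, DecidablePred (P j)] (i : Fin l) (x : m i → ℂ) (ε : ℂ) :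
    (ℂ × (∀ j, {k // P j k} → ℂ)) →ₗ[ℂ] (Option (Σ j, m j) → ℂ) :=
  (zmap m).comp ((LinearMap.fst ℂ ℂ _).prod
    ((LcMap m A hA P).comp (LinearMap.snd ℂ ℂ _)
      + (LinearMap.toSpanSingleton ℂ _ (Pi.single i x)).comp
        (ε • LinearMap.fst ℂ ℂ _
          - (phiv m α).comp ((LcMap m A hA P).comp (LinearMap.snd ℂ ℂ _)))))

lemma FMap_apply (hA : ∀ i, (A i).IsHermitian) (P : ∀ j, m j → Prop)
    [∀ j, DecidablePred (P j)] (i : Fin l) (x : m i → ℂ) (ε t : ℂ)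
    (c : ∀ j, {k // P j k} → ℂ) :
    FMap m A α hA P i x ε (t, c)
      = zmap m (t, LcMap m A hA P c
          + (ε * t - phiv m α (LcMap m A hA P c)) • (Pi.single i x : ∀ j, m j → ℂ)) := by
  simp [FMap, LinearMap.toSpanSingleton_apply, smul_eq_mul, sub_smul]

lemma FMap_form (hA : ∀ i, (A i).IsHermitian) (P : ∀ j, m j → Prop)
    [∀ j, DecidablePred (P j)] {i : Fin l} {x : m i → ℂ}
    (hx0 : A i *ᵥ x = 0) (hx1 : star (α i) ⬝ᵥ x = 1) (ε t : ℂ)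
    (c : ∀ j, {k // P j k} → ℂ) :
    star (FMap m A α hA P i x ε (t, c)) ⬝ᵥ
        (cutVertexAdj m A α *ᵥ FMap m A α hA P i x ε (t, c))
      = star t * (ε * t) + t * star (ε * t)
        + ((∑ j, ∑ k, (hA j).eigenvalues k * Complex.normSq (subExt (P j) (c j) k) : ℝ) : ℂ) := by
  rw [FMap_apply, cut_form]
  set w := LcMap m A hA P c with hw
  set s := ε * t - phiv m α w with hs
  have hφ : phiv m α (w + s • (Pi.single i x : ∀ j, m j → ℂ)) = ε * t := by
    rw [map_add, _root_.map_smul, phiv_single m α i x, hx1, hs]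
    simp [smul_eq_mul]
  rw [hφ]
  congr 1
  have hj : ∀ j, star ((w + s • (Pi.single i x : ∀ j, m j → ℂ)) j) ⬝ᵥ (A j *ᵥ (w + s • (Pi.single i x : ∀ j, m j → ℂ)) j)
      = star (w j) ⬝ᵥ (A j *ᵥ w j) := by
    intro j
    by_cases hji : j = i
    · subst hji
      have he : (w + s • (Pi.single j x : ∀ j', m j' → ℂ)) j = w j + s • x := by
        simp [Pi.single_eq_same]
      rw [he, herm_cross (hA j) hx0]
    · have he : (w + s • (Pi.single i x : ∀ j', m j' → ℂ)) j = w j := by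
        simp [Pi.single_eq_of_ne hji]
      rw [he]
  rw [Finset.sum_congr rfl fun j _ => hj j]

  have hval : ∀ j, star (w j) ⬝ᵥ (A j *ᵥ w j)
      = ((∑ k, (hA j).eigenvalues k * Complex.normSq (subExt (P j) (c j) k) : ℝ) : ℂ) := by
    intro j
    rw [hw, LcMap_apply, eigExt_form]
  rw [Finset.sum_congr rfl fun j _ => hval j]
  norm_cast

end FMapSec

set_option maxHeartbeats 2000000 in
/-- Cut-vertex lemma, rank-increasing case: if some component `G̃_i` satisfies
`rk(G̃_i + v) = rk(G̃_i) + 2`, then `p(G̃) = Σ p(G̃_j) + 1`, `n(G̃) = Σ n(G̃_j) + 1`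
and `η(G̃) = Σ η(G̃_j) - 1`. -/
theorem cut_vertex_rank_plus_two {l : ℕ} (m : Fin l → Type*)
    [∀ i, Fintype (m i)] [∀ i, DecidableEq (m i)]
    (A : ∀ i, Matrix (m i) (m i) ℂ) (α : ∀ i, m i → ℂ)
    (hA : ∀ i, (A i).IsHermitian)
    (hmix : IsMixedAdj (cutVertexAdj m A α))
    (hG : (cutVertexAdj m A α).IsHermitian)
    (hrk : ∃ i, (borderOne (A i) (α i)).rank = (A i).rank + 2) :
    posIdx hG = (∑ j, posIdx (hA j)) + 1 ∧
    negIdx hG = (∑ j, negIdx (hA j)) + 1 ∧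
    nulIdx hG + 1 = ∑ j, nulIdx (hA j) := by
  classical
  obtain ⟨i, hi⟩ := hrk
  obtain ⟨x, hx0, hx1⟩ := exists_ker_vec hi
  -- Positive inertia lower bound
  have hposb : (∑ j, posIdx (hA j)) + 1 ≤ posIdx hG := by
    have hb := le_posIdx_aux hG
      (FMap m A α hA (fun j k => 0 < (hA j).eigenvalues k) i x 1) ?_
    · rw [finrank_prod, finrank_self, finrank_pi_fintype] at hb
      have he : ∀ j, finrank ℂ ({k // 0 < (hA j).eigenvalues k} → ℂ) = posIdx (hA j) := by
        intro j; rw [finrank_pi]; rfl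
      rw [Finset.sum_congr rfl (fun j _ => he j)] at hb
      have hb2 : posIdx hG = Fintype.card {o // 0 < hG.eigenvalues o} := rfl
      omega
    · rintro ⟨t, c⟩ hz
      rw [FMap_form m A α hA _ hx0 hx1]
      have hterm : ∀ (j) (k : m j),
          0 ≤ (hA j).eigenvalues k
            * Complex.normSq (subExt (fun k => 0 < (hA j).eigenvalues k) (c j) k) := by
        intro j k
        by_cases h : 0 < (hA j).eigenvalues k
        · exact mul_nonneg h.le (Complex.normSq_nonneg _)
        · simp [subExt, h]
      have hRj : ∀ j, 0 ≤ ∑ k, (hA j).eigenvalues k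
            * Complex.normSq (subExt (fun k => 0 < (hA j).eigenvalues k) (c j) k) :=
        fun j => Finset.sum_nonneg fun k _ => hterm j k
      have hre : (star t * (1 * t) + t * star (1 * t)
          + ((∑ j, ∑ k, (hA j).eigenvalues k
            * Complex.normSq (subExt (fun k => 0 < (hA j).eigenvalues k) (c j) k) : ℝ) : ℂ)).re
          = Complex.normSq t + Complex.normSq t
            + ∑ j, ∑ k, (hA j).eigenvalues k
              * Complex.normSq (subExt (fun k => 0 < (hA j).eigenvalues k) (c j) k) := by
        rw [one_mul, show star t = (starRingEnd ℂ) t from rfl,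
          mul_comm ((starRingEnd ℂ) t) t, Complex.mul_conj]
        simp
      rw [hre]
      by_cases ht : t = 0
      · have hc : c ≠ 0 := by
          intro h; exact hz (by rw [ht, h]; rfl)
        have : ∃ j, c j ≠ 0 := by
          by_contra hcon; push_neg at hcon
          exact hc (funext fun j => hcon j)
        obtain ⟨j0, hj0⟩ := this
        have : ∃ k, c j0 k ≠ 0 := by
          by_contra hcon; push_neg at hcon
          exact hj0 (funext fun k => hcon k)
        obtain ⟨k0, hk0⟩ := this
        have hstrong : 0 < ∑ k, (hA j0).eigenvalues k
            * Complex.normSq (subExt (fun k => 0 < (hA j0).eigenvalues k) (c j0) k) := by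
          refine Finset.sum_pos' (fun k _ => hterm j0 k) ⟨k0.1, Finset.mem_univ _, ?_⟩
          have hsub : subExt (fun k => 0 < (hA j0).eigenvalues k) (c j0) k0.1 = c j0 k0 := by
            simp [subExt, k0.2]
          rw [hsub]
          exact mul_pos k0.2 (Complex.normSq_pos.mpr hk0)
        have hall : 0 ≤ ∑ j, ∑ k, (hA j).eigenvalues k
            * Complex.normSq (subExt (fun k => 0 < (hA j).eigenvalues k) (c j) k) :=
          Finset.sum_nonneg fun j _ => hRj j
        have hlt : 0 < ∑ j, ∑ k, (hA j).eigenvalues k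
            * Complex.normSq (subExt (fun k => 0 < (hA j).eigenvalues k) (c j) k) := by
          refine Finset.sum_pos' (fun j _ => hRj j) ⟨j0, Finset.mem_univ _, hstrong⟩
        have := Complex.normSq_nonneg t
        linarith
      · have h1 : 0 < Complex.normSq t := Complex.normSq_pos.mpr ht
        have h2 : 0 ≤ ∑ j, ∑ k, (hA j).eigenvalues k
            * Complex.normSq (subExt (fun k => 0 < (hA j).eigenvalues k) (c j) k) :=
          Finset.sum_nonneg fun j _ => hRj j
        linarith
  -- Negative inertia lower bound
  have hnegb : (∑ j, negIdx (hA j)) + 1 ≤ negIdx hG := by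
    have hb := le_negIdx_aux hG
      (FMap m A α hA (fun j k => (hA j).eigenvalues k < 0) i x (-1)) ?_
    · rw [finrank_prod, finrank_self, finrank_pi_fintype] at hb
      have he : ∀ j, finrank ℂ ({k // (hA j).eigenvalues k < 0} → ℂ) = negIdx (hA j) := by
        intro j; rw [finrank_pi]; rfl
      rw [Finset.sum_congr rfl (fun j _ => he j)] at hb
      have hb2 : negIdx hG = Fintype.card {o // hG.eigenvalues o < 0} := rfl
      omega
    · rintro ⟨t, c⟩ hz
      rw [FMap_form m A α hA _ hx0 hx1]
      have hterm : ∀ (j) (k : m j),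
          (hA j).eigenvalues k
            * Complex.normSq (subExt (fun k => (hA j).eigenvalues k < 0) (c j) k) ≤ 0 := by
        intro j k
        by_cases h : (hA j).eigenvalues k < 0
        · exact mul_nonpos_of_nonpos_of_nonneg h.le (Complex.normSq_nonneg _)
        · simp [subExt, h]
      have hRj : ∀ j, (∑ k, (hA j).eigenvalues k
            * Complex.normSq (subExt (fun k => (hA j).eigenvalues k < 0) (c j) k)) ≤ 0 :=
        fun j => Finset.sum_nonpos fun k _ => hterm j k
      have hre : (star t * (-1 * t) + t * star (-1 * t)
          + ((∑ j, ∑ k, (hA j).eigenvalues k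
            * Complex.normSq (subExt (fun k => (hA j).eigenvalues k < 0) (c j) k) : ℝ) : ℂ)).re
          = -Complex.normSq t - Complex.normSq t
            + ∑ j, ∑ k, (hA j).eigenvalues k
              * Complex.normSq (subExt (fun k => (hA j).eigenvalues k < 0) (c j) k) := by
        rw [show (-1:ℂ) * t = -t by ring, star_neg,
          show star t * -t + t * -star t = -(t * star t) + -(t * star t) by ring,
          show star t = (starRingEnd ℂ) t from rfl, Complex.mul_conj]
        simp
        ring
      rw [hre]
      by_cases ht : t = 0
      · have hc : c ≠ 0 := by
          intro h; exact hz (by rw [ht, h]; rfl)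
        have : ∃ j, c j ≠ 0 := by
          by_contra hcon; push_neg at hcon
          exact hc (funext fun j => hcon j)
        obtain ⟨j0, hj0⟩ := this
        have : ∃ k, c j0 k ≠ 0 := by
          by_contra hcon; push_neg at hcon
          exact hj0 (funext fun k => hcon k)
        obtain ⟨k0, hk0⟩ := this
        have hstrong : (∑ k, (hA j0).eigenvalues k
            * Complex.normSq (subExt (fun k => (hA j0).eigenvalues k < 0) (c j0) k)) < 0 := by
          have hwit : (hA j0).eigenvalues k0.1
              * Complex.normSq (subExt (fun k => (hA j0).eigenvalues k < 0) (c j0) k0.1) < 0 := by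
            have hsub : subExt (fun k => (hA j0).eigenvalues k < 0) (c j0) k0.1 = c j0 k0 := by
              simp [subExt, k0.2]
            rw [hsub]
            exact mul_neg_of_neg_of_pos k0.2 (Complex.normSq_pos.mpr hk0)
          have := Finset.sum_lt_sum (f := fun k => (hA j0).eigenvalues k
              * Complex.normSq (subExt (fun k => (hA j0).eigenvalues k < 0) (c j0) k))
            (g := fun _ => (0 : ℝ)) (fun k _ => hterm j0 k)
            ⟨k0.1, Finset.mem_univ _, hwit⟩
          simpa using this
        have hlt : (∑ j, ∑ k, (hA j).eigenvalues k
            * Complex.normSq (subExt (fun k => (hA j).eigenvalues k < 0) (c j) k)) < 0 := by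
          have := Finset.sum_lt_sum (f := fun j => ∑ k, (hA j).eigenvalues k
              * Complex.normSq (subExt (fun k => (hA j).eigenvalues k < 0) (c j) k))
            (g := fun _ => (0 : ℝ)) (fun j _ => hRj j) ⟨j0, Finset.mem_univ _, hstrong⟩
          simpa using this
        have := Complex.normSq_nonneg t
        linarith
      · have h1 : 0 < Complex.normSq t := Complex.normSq_pos.mpr ht
        have h2 : (∑ j, ∑ k, (hA j).eigenvalues k
            * Complex.normSq (subExt (fun k => (hA j).eigenvalues k < 0) (c j) k)) ≤ 0 :=
          Finset.sum_nonpos fun j _ => hRj j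
        linarith
  -- Nullity lower bound
  have hnulb : ∑ j, nulIdx (hA j) ≤ nulIdx hG + 1 := by
    set K := LcMap m A hA (fun j k => (hA j).eigenvalues k = 0) with hK
    set ψ := (phiv m α).comp K with hψ
    set f := ((zmap m).comp ((LinearMap.prod (0 : (∀ j, m j → ℂ) →ₗ[ℂ] ℂ) LinearMap.id).comp
      (K.comp (Submodule.subtype (LinearMap.ker ψ))))) with hf
    have hfapp : ∀ z : LinearMap.ker ψ, f z = zmap m (0, K z.1) := fun z => rfl
    have hker : ∀ z : LinearMap.ker ψ, cutVertexAdj m A α *ᵥ f z = 0 := by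
      intro z
      rw [hfapp z, cut_mulVec]
      have h1 : (∑ j, star (α j) ⬝ᵥ (K z.1) j) = 0 := LinearMap.mem_ker.mp z.2
      have h2 : ∀ j, A j *ᵥ (K z.1) j = 0 := fun j =>
        eigExt_kernel (hA j) _ (fun k hk => hk) _
      funext o
      cases o with
      | none => simpa using h1
      | some s =>
        show (0 : ℂ) * α s.1 s.2 + (A s.1 *ᵥ (K z.1) s.1) s.2 = 0
        rw [h2 s.1]
        simp
    have hfinj : Function.Injective f := by
      intro z1 z2 h12
      apply Subtype.ext
      have hKz : K z1.1 = K z2.1 := by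
        funext j b
        have h0 := congrFun h12 (some ⟨j, b⟩)
        rw [hfapp z1, hfapp z2] at h0
        exact h0
      rw [hK] at hKz
      funext j
      exact eigExt_injective (hA j) _ (congrFun hKz j)
    have hnul := le_nulIdx_aux hG f hfinj hker
    -- dimension of ker ψ
    obtain ⟨cx, hcx⟩ := exists_eigExt_eq (hA i) hx0
    have hK1 : K (Pi.single i cx) = (Pi.single i x : ∀ j, m j → ℂ) := by
      funext j
      by_cases hj : j = i
      · subst hj
        show eigExt (hA j) _ ((Pi.single j cx : ∀ j', {k // (hA j').eigenvalues k = 0} → ℂ) j)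
          = (Pi.single j x : ∀ j', m j' → ℂ) j
        rw [Pi.single_eq_same, Pi.single_eq_same, hcx]
      · show eigExt (hA j) _ ((Pi.single i cx : ∀ j', {k // (hA j').eigenvalues k = 0} → ℂ) j)
          = (Pi.single i x : ∀ j', m j' → ℂ) j
        rw [Pi.single_eq_of_ne hj, Pi.single_eq_of_ne hj, map_zero]
    have hψ1 : ψ (Pi.single i cx) = 1 := by
      show phiv m α (K (Pi.single i cx)) = 1
      rw [hK1, phiv_single, hx1]
    have hsurj : LinearMap.range ψ = ⊤ := by
      rw [LinearMap.range_eq_top]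
      intro zz
      exact ⟨zz • (Pi.single i cx : ∀ j, {k // (hA j).eigenvalues k = 0} → ℂ),
        by rw [_root_.map_smul, hψ1, smul_eq_mul, mul_one]⟩
    have hrn := LinearMap.finrank_range_add_finrank_ker ψ
    rw [hsurj, finrank_top, finrank_self] at hrn
    have hdom : finrank ℂ (∀ j, {k // (hA j).eigenvalues k = 0} → ℂ)
        = ∑ j, nulIdx (hA j) := by
      rw [finrank_pi_fintype]
      exact Finset.sum_congr rfl fun j _ => by rw [finrank_pi]; rfl
    have hb2 : nulIdx hG = Fintype.card {o // hG.eigenvalues o = 0} := rfl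
    omega
  -- counting
  have hcG : posIdx hG + negIdx hG + nulIdx hG = Fintype.card (Option (Σ j, m j)) :=
    idx_sum hG
  have hcO : Fintype.card (Option (Σ j, m j)) = Fintype.card (Σ j, m j) + 1 :=
    Fintype.card_option
  have hcS : Fintype.card (Σ j, m j) = ∑ j, Fintype.card (m j) := Fintype.card_sigma
  have hsum3 : ∑ j, Fintype.card (m j)
      = (∑ j, posIdx (hA j)) + (∑ j, negIdx (hA j)) + (∑ j, nulIdx (hA j)) := by
    rw [← Finset.sum_add_distrib, ← Finset.sum_add_distrib]
    exact Finset.sum_congr rfl fun j _ => (idx_sum (hA j)).symm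
  refine ⟨by omega, by omega, by omega⟩
end

section
/- For n ≥ 3, the Hermitian adjacency matrix of a mixed cycle C̃_n of odd length n has nullity 1 if the signature σ(C̃_n) is odd, and nullity 0 if σ(C̃_n) is even. -/
/-- The Hermitian adjacency matrix of a mixed cycle on `n` vertices, where `h j` is the
entry in position `(j, j+1)` (indices mod `n`). -/
def cycleAdj (n : ℕ) [NeZero n] (h : Fin n → ℂ) : Matrix (Fin n) (Fin n) ℂ :=
  fun a b => if b = a + 1 then h a else if a = b + 1 then star (h b) else 0

open Complex Fin.CommRing in
/-- An odd mixed cycle `C̃_n` (`n ≥ 3` odd, entries in `{1, i, -i}`, value `i^σ` where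
`σ` is the signature) has nullity `1` when `σ` is odd and nullity `0` when `σ` is even. -/
theorem mixed_cycle_odd_nullity (n : ℕ) [NeZero n] (hn : 3 ≤ n) (hodd : Odd n)
    (h : Fin n → ℂ) (hent : ∀ j, h j ∈ ({1, I, -I} : Set ℂ))
    (σ : ℤ) (hσ : (∏ j, h j) = I ^ σ)
    (hH : (cycleAdj n h).IsHermitian) :
    (Odd σ → nulIdx hH = 1) ∧ (Even σ → nulIdx hH = 0) := by
  classical
  -- entries are units
  have hu : ∀ j, h j * star (h j) = 1 := by
    intro j
    rcases hent j with hj | hj | hj <;> rw [hj] <;> simp [Complex.star_def]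
  have hu' : ∀ j, star (h j) * h j = 1 := fun j => by rw [mul_comm]; exact hu j
  -- arithmetic in `Fin n`
  have h2ne : (2 : Fin n) ≠ 0 := by
    have : ((2:ℕ) : Fin n) ≠ 0 := by
      intro hc
      have := congrArg Fin.val hc
      rw [Fin.val_natCast, Fin.val_zero, Nat.mod_eq_of_lt (by omega)] at this
      omega
    simpa using this
  set m : Fin n := (((n+1)/2 : ℕ) : Fin n) with hm_def
  have hm : (2 : Fin n) * m = 1 := by
    have h2 : (2 : Fin n) = ((2:ℕ) : Fin n) := by norm_cast
    have hd : 2 ∣ n + 1 := by rcases hodd with ⟨k, hk⟩; omega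
    rw [hm_def, h2, ← Nat.cast_mul, Nat.mul_div_cancel' hd, Nat.cast_add, Fin.natCast_self,
      Nat.cast_one, zero_add]
  -- the row equation of the matrix
  have hrow : ∀ (x : Fin n → ℂ) (a : Fin n),
      (cycleAdj n h).mulVec x a = h a * x (a+1) + star (h (a-1)) * x (a-1) := by
    intro x a
    have hane : a + 1 ≠ a - 1 := by
      intro hc
      apply h2ne
      have : a + 1 + 1 = a - 1 + 1 := by rw [hc]
      have h2a : a + 2 = a := by
        rw [show a + 2 = a + 1 + 1 by ring, hc, sub_add_cancel]
      have := congrArg (fun t => t - a) h2a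
      simpa [add_sub_cancel_left] using this
    have : ∀ b : Fin n, cycleAdj n h a b * x b =
        (if b = a + 1 then h a * x b else 0) +
          (if b = a - 1 then star (h (a-1)) * x b else 0) := by
      intro b
      by_cases hb1 : b = a + 1
      · subst hb1
        have e : cycleAdj n h a (a+1) = h a := if_pos rfl
        rw [e, if_pos rfl, if_neg hane, add_zero]
      · by_cases hb2 : b = a - 1
        · subst hb2
          have hab : a = (a - 1) + 1 := (sub_add_cancel a 1).symm
          have hne2 : a - 1 ≠ a + 1 := fun hc => hane hc.symm
          have e : cycleAdj n h a (a-1) = star (h (a-1)) := by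
            simp only [cycleAdj]
            rw [if_neg hne2, if_pos hab]
          rw [e, if_neg hne2, if_pos rfl, zero_add]
        · have hab : ¬ (a = b + 1) := by
            intro hc
            exact hb2 (by rw [hc]; ring)
          have e : cycleAdj n h a b = 0 := by
            simp only [cycleAdj]
            rw [if_neg hb1, if_neg hab]
          rw [e, zero_mul, if_neg hb1, if_neg hb2, add_zero]
    rw [Matrix.mulVec, dotProduct]
    simp only [this, Finset.sum_add_distrib, Finset.sum_ite_eq', Finset.mem_univ, if_true]
  -- the step-two coefficient
  set c : Fin n → ℂ := fun a => -(star (h a) * star (h (a-1))) with hc_def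
  -- kernel characterization
  have hker : ∀ x : Fin n → ℂ, (cycleAdj n h).mulVec x = 0 ↔
      ∀ b : Fin n, x (b+2) = c (b+1) * x b := by
    intro x
    constructor
    · intro hx b
      have h0 : h (b+1) * x (b+1+1) + star (h (b+1-1)) * x (b+1-1) = 0 := by
        rw [← hrow x (b+1), hx]; rfl
      have e1 : b + 1 + 1 = b + 2 := by ring
      have e2 : b + 1 - 1 = b := by ring
      rw [e1, e2] at h0
      have := congrArg (fun t => star (h (b+1)) * t) h0
      simp only [mul_add, ← mul_assoc, hu' (b+1), one_mul, mul_zero] at this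
      have : x (b+2) = -(star (h (b+1)) * star (h b) * x b) := by linear_combination this
      rw [this, hc_def]
      simp only [e2]
      ring
    · intro hx
      funext a
      rw [hrow x a]
      have := hx (a - 1)
      have e1 : a - 1 + 2 = a + 1 := by ring
      have e2 : a - 1 + 1 = a := by ring
      rw [e1, e2] at this
      rw [this, hc_def]
      simp only [Pi.zero_apply]
      have : h a * (star (h a) * star (h (a-1))) = star (h (a-1)) := by
        rw [← mul_assoc, hu a, one_mul]
      linear_combination (-(x (a-1))) * this
  -- the partial products
  set g : ℕ → ℂ := fun k => ∏ i ∈ Finset.range k, c (2 * (i : Fin n) + 1) with hg_def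
  have hg0 : g 0 = 1 := by simp [hg_def]
  have hgs : ∀ k, g (k+1) = c (2 * (k : Fin n) + 1) * g k := by
    intro k
    rw [hg_def]
    simp only [Finset.prod_range_succ]
    ring
  -- the iterated step
  have hstep : ∀ (x : Fin n → ℂ), (∀ b : Fin n, x (b+2) = c (b+1) * x b) →
      ∀ k : ℕ, x (2 * (k : Fin n)) = g k * x 0 := by
    intro x hx k
    induction k with
    | zero => simp [hg0]
    | succ k ih =>
      have e1 : 2 * ((k+1 : ℕ) : Fin n) = 2 * (k : Fin n) + 2 := by push_cast; ring
      rw [e1, hx (2 * (k : Fin n)), ih, hgs k]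
      ring
  -- the total product
  have hgn : g n = -((-1:ℂ)^σ) := by
    have e1 : g n = ∏ i : Fin n, c (2 * i + 1) := by
      rw [hg_def]
      show ∏ i ∈ Finset.range n, c (2 * (i : Fin n) + 1) = _
      rw [← Fin.prod_univ_eq_prod_range (fun i => c (2 * (i : Fin n) + 1)) n]
      exact Finset.prod_congr rfl fun i _ => by rw [Fin.cast_val_eq_self]
    have hinj : Function.Injective (fun k : Fin n => 2 * k + 1) := by
      intro a b hab
      simp only [add_left_inj] at hab
      have := congrArg (fun t => m * t) hab
      simpa only [← mul_assoc, mul_comm m 2, hm, one_mul] using this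
    have hbij : Function.Bijective (fun k : Fin n => 2 * k + 1) :=
      Finite.injective_iff_bijective.mp hinj
    have e2 : ∏ i : Fin n, c (2 * i + 1) = ∏ a : Fin n, c a :=
      Fintype.prod_bijective _ hbij _ _ fun x => rfl
    have e3 : ∏ a : Fin n, c (a - 1) = ∏ a : Fin n, c a :=
      Fintype.prod_bijective (fun a : Fin n => a - 1)
        (Finite.injective_iff_bijective.mp (sub_left_injective)) _ _ fun x => rfl
    have hc1 : ∀ a : Fin n, c a = (-1) * (star (h a) * star (h (a-1))) := by
      intro a; rw [hc_def]; ring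
    have hstar : ∏ a : Fin n, star (h a) = ((-I) : ℂ)^σ := by
      have : ∏ a : Fin n, star (h a) = star (∏ a : Fin n, h a) :=
        (map_prod (starRingEnd ℂ) h Finset.univ).symm
      rw [this, hσ, show (star (I^σ) : ℂ) = (starRingEnd ℂ) (I^σ) from rfl,
        map_zpow₀, Complex.conj_I]
    have hstar' : ∏ a : Fin n, star (h (a - 1)) = ((-I) : ℂ)^σ := by
      have : ∏ a : Fin n, star (h (a - 1)) = ∏ a : Fin n, star (h a) :=
        Fintype.prod_bijective (fun a : Fin n => a - 1)
          (Finite.injective_iff_bijective.mp (sub_left_injective)) _ _ fun x => rfl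
      rw [this, hstar]
    have hsq : (((-I) : ℂ)^σ) * (((-I) : ℂ)^σ) = (-1:ℂ)^σ := by
      rw [← zpow_add₀ (by simp [Complex.I_ne_zero] : ((-I):ℂ) ≠ 0)]
      have : σ + σ = 2 * σ := by ring
      rw [this, zpow_mul]
      congr 1
      rw [zpow_two]
      simp [Complex.I_mul_I]
    calc g n = ∏ a : Fin n, c a := by rw [e1, e2]
      _ = ∏ a : Fin n, ((-1) * (star (h a) * star (h (a-1)))) :=
          Finset.prod_congr rfl fun a _ => hc1 a
      _ = ((-1:ℂ) ^ (Fintype.card (Fin n))) *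
            ((∏ a : Fin n, star (h a)) * (∏ a : Fin n, star (h (a-1)))) := by
          rw [Finset.prod_mul_distrib, Finset.prod_mul_distrib, Finset.prod_const,
            Finset.card_univ]
      _ = -((-1:ℂ)^σ) := by
          rw [hstar, hstar', hsq, Fintype.card_fin]
          rw [hodd.neg_one_pow]
          ring
  -- the kernel vector
  set v : Fin n → ℂ := fun j => g ((m * j).val) with hv_def
  have hv0 : v 0 = 1 := by
    rw [hv_def]
    simp only [mul_zero, Fin.val_zero, hg0]
  have hvne : v ≠ 0 := fun hc => by
    have := congrFun hc 0
    rw [hv0] at this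
    exact one_ne_zero this
  -- every solution of the recurrence is a multiple of `v`
  have hmul : ∀ x : Fin n → ℂ, (∀ b : Fin n, x (b+2) = c (b+1) * x b) → x = x 0 • v := by
    intro x hx
    funext j
    have hj : 2 * ((((m * j).val : ℕ)) : Fin n) = j := by
      rw [Fin.cast_val_eq_self, ← mul_assoc, hm, one_mul]
    have hst := hstep x hx (m * j).val
    rw [hj] at hst
    rw [hst, hv_def]
    simp only [Pi.smul_apply, smul_eq_mul]
    ring
  -- the dimension bridge
  have hb1 : nulIdx hH + (cycleAdj n h).rank = n := by
    rw [nulIdx, hH.rank_eq_card_non_zero_eigs]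
    have := Fintype.card_subtype_compl (fun i : Fin n => hH.eigenvalues i = 0)
    have hle := Fintype.card_subtype_le (fun i : Fin n => hH.eigenvalues i = 0)
    simp only [ne_eq, Fintype.card_fin] at *
    omega
  have hb2 : (cycleAdj n h).rank +
      Module.finrank ℂ (LinearMap.ker (cycleAdj n h).mulVecLin) = n := by
    have := LinearMap.finrank_range_add_finrank_ker (cycleAdj n h).mulVecLin
    rw [Matrix.rank]
    rw [this, Module.finrank_fintype_fun_eq_card, Fintype.card_fin]
  have hb3 : nulIdx hH = Module.finrank ℂ (LinearMap.ker (cycleAdj n h).mulVecLin) := by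
    omega
  constructor
  · -- odd case
    intro hos
    have hg_n : g n = 1 := by rw [hgn, hos.neg_one_zpow]; ring
    have hvrec : ∀ b : Fin n, v (b+2) = c (b+1) * v b := by
      intro b
      set k := (m * b).val with hk_def
      have hkn : k < n := (m * b).isLt
      have hcast : ((k : ℕ) : Fin n) = m * b := Fin.cast_val_eq_self _
      have hstep2 : m * (b + 2) = m * b + 1 := by
        rw [mul_add, mul_comm m 2, hm]
      have hnat : m * b + 1 = ((k + 1 : ℕ) : Fin n) := by
        rw [← hcast]; push_cast; ring
      have hval : (m * (b + 2)).val = (k + 1) % n := by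
        rw [hstep2, hnat, Fin.val_natCast]
      have hc_eq : c (b + 1) = c (2 * ((k : ℕ) : Fin n) + 1) := by
        rw [hcast, ← mul_assoc, hm, one_mul]
      have hrhs : c (b + 1) * v b = g (k + 1) := by
        rw [hc_eq, hv_def]
        exact (hgs k).symm
      show g ((m * (b + 2)).val) = c (b + 1) * v b
      rw [hval, hrhs]
      rcases Nat.lt_or_ge (k + 1) n with hlt | hge
      · rw [Nat.mod_eq_of_lt hlt]
      · have hkeq : k + 1 = n := by omega
        rw [hkeq, Nat.mod_self, hg0, hg_n]
    have hker_eq : LinearMap.ker (cycleAdj n h).mulVecLin = Submodule.span ℂ {v} := by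
      apply le_antisymm
      · intro x hx
        rw [LinearMap.mem_ker, Matrix.mulVecLin_apply] at hx
        rw [hmul x ((hker x).mp hx)]
        exact Submodule.smul_mem _ _ (Submodule.mem_span_singleton_self v)
      · rw [Submodule.span_le, Set.singleton_subset_iff]
        rw [SetLike.mem_coe, LinearMap.mem_ker, Matrix.mulVecLin_apply]
        exact (hker v).mpr hvrec
    rw [hb3, hker_eq]
    exact finrank_span_singleton hvne
  · -- even case
    intro hes
    have hg_n : g n = -1 := by rw [hgn, hes.neg_one_zpow]
    have hker_bot : LinearMap.ker (cycleAdj n h).mulVecLin = ⊥ := by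
      rw [Submodule.eq_bot_iff]
      intro x hx
      rw [LinearMap.mem_ker, Matrix.mulVecLin_apply] at hx
      have hrec := (hker x).mp hx
      have hx0 : x 0 = 0 := by
        have hst := hstep x hrec n
        rw [Fin.natCast_self, mul_zero, hg_n] at hst
        have h2x : (2 : ℂ) * x 0 = 0 := by linear_combination hst
        exact (mul_eq_zero.mp h2x).resolve_left two_ne_zero
      rw [hmul x hrec, hx0, zero_smul]
    rw [hb3, hker_bot, finrank_bot]
end

section
/- A mixed triangle with an odd number of directed edges (an odd triangle) and a mixed triangle with an even number of directed edges (an even triangle) are never switching equivalent; equivalently, their Hermitian adjacency matrices have different spectra. In particular, an odd triangle has rank 2 (nullity 1) while an even triangle has rank 3 (nullity 0). -/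
open Complex in
/-- `H` is the Hermitian adjacency matrix of a mixed triangle: a Hermitian `3 × 3`
matrix with zero diagonal whose off-diagonal entries lie in `{1, i, -i}`. -/
def IsMixedTriangle (H : Matrix (Fin 3) (Fin 3) ℂ) : Prop :=
  H.IsHermitian ∧ (∀ j, H j j = 0) ∧ ∀ j k, j ≠ k → H j k ∈ ({1, I, -I} : Set ℂ)

/-- Two mixed graphs on the same vertex set are switching equivalent if their Hermitian
adjacency matrices are related by conjugation by a diagonal matrix with diagonal entries
in `{±1, ±i}`, possibly combined with taking the transpose (converse). -/
def SwitchEquiv {n : Type*} [Fintype n] [DecidableEq n] (H₁ H₂ : Matrix n n ℂ) : Prop :=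
  ∃ D : n → ℂ, (∀ j, D j ∈ ({1, -1, Complex.I, -Complex.I} : Set ℂ)) ∧
    (H₂ = (Matrix.diagonal D)⁻¹ * H₁ * Matrix.diagonal D ∨
      H₂ = ((Matrix.diagonal D)⁻¹ * H₁ * Matrix.diagonal D).transpose)

lemma det_mixed (H : Matrix (Fin 3) (Fin 3) ℂ) (h : IsMixedTriangle H) :
    H.det = H 0 1 * H 1 2 * H 2 0 + star (H 0 1 * H 1 2 * H 2 0) := by
  obtain ⟨hH, hd, -⟩ := h
  rw [Matrix.det_fin_three, hd 0, hd 1, hd 2, ← hH.apply 0 2, ← hH.apply 1 0, ← hH.apply 2 1]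
  simp only [star_mul']
  ring


open Complex in
/-- An odd triangle (odd number of arcs, i.e. value in `{i, -i}`) and an even triangle
(even number of arcs, value in `{1, -1}`) are never switching equivalent; their
characteristic polynomials differ; the odd triangle has rank 2 and the even one rank 3. -/
theorem odd_even_triangle_not_equivalent (H₁ H₂ : Matrix (Fin 3) (Fin 3) ℂ)
    (h₁ : IsMixedTriangle H₁) (h₂ : IsMixedTriangle H₂)
    (hodd : H₁ 0 1 * H₁ 1 2 * H₁ 2 0 ∈ ({I, -I} : Set ℂ))
    (heven : H₂ 0 1 * H₂ 1 2 * H₂ 2 0 ∈ ({1, -1} : Set ℂ)) :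
    ¬ SwitchEquiv H₁ H₂ ∧ H₁.charpoly ≠ H₂.charpoly ∧ H₁.rank = 2 ∧ H₂.rank = 3 := by
  -- determinants
  have hdet1 : H₁.det = 0 := by
    rw [det_mixed H₁ h₁]
    rcases hodd with h | h <;> rw [h] <;> simp [Complex.star_def, Complex.conj_I]
  have hdet2 : H₂.det ≠ 0 := by
    rw [det_mixed H₂ h₂]
    rcases heven with h | h <;> rw [h] <;> norm_num
  -- charpoly
  have hcp : H₁.charpoly ≠ H₂.charpoly := by
    intro h
    apply hdet2
    rw [Matrix.det_eq_sign_charpoly_coeff, ← h, ← Matrix.det_eq_sign_charpoly_coeff, hdet1]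
  -- switch equivalence preserves determinant
  have hsw : ¬ SwitchEquiv H₁ H₂ := by
    rintro ⟨D, hD, hc⟩
    have hDdet : (Matrix.diagonal D).det ≠ 0 := by
      rw [Matrix.det_diagonal]
      refine Finset.prod_ne_zero_iff.mpr fun j _ => ?_
      have hj := hD j
      simp only [Set.mem_insert_iff, Set.mem_singleton_iff] at hj
      rcases hj with h | h | h | h <;> rw [h] <;>
        simp [Complex.I_ne_zero, neg_eq_zero]
    have key : ((Matrix.diagonal D)⁻¹ * H₁ * Matrix.diagonal D).det = H₁.det := by
      rw [Matrix.det_mul, Matrix.det_mul, Matrix.det_nonsing_inv, Ring.inverse_eq_inv',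
        mul_comm ((Matrix.diagonal D).det)⁻¹ H₁.det, mul_assoc,
        inv_mul_cancel₀ hDdet, mul_one]
    apply hdet2
    rcases hc with h | h <;> rw [h] <;> simp [Matrix.det_transpose, key, hdet1]
  refine ⟨hsw, hcp, ?_, ?_⟩
  · -- rank H₁ = 2
    have hne : H₁ 0 1 ≠ 0 ∧ H₁ 1 2 ≠ 0 := by
      constructor <;> rcases h₁.2.2 0 1 (by decide) with h | h | h <;>
        rcases h₁.2.2 1 2 (by decide) with h' | h' | h' <;>
        simp_all [Complex.I_ne_zero]
    -- upper bound: nontrivial kernel since det = 0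
    have hker : ∃ v ≠ 0, H₁.mulVec v = 0 :=
      (Matrix.exists_mulVec_eq_zero_iff).mpr hdet1
    have hub : H₁.rank ≤ 2 := by
      obtain ⟨v, hv, hmv⟩ := hker
      have h3 : H₁.rank + Module.finrank ℂ (LinearMap.ker H₁.mulVecLin) = 3 := by
        have := LinearMap.finrank_range_add_finrank_ker H₁.mulVecLin
        simpa [Matrix.rank] using this
      have hpos : 0 < Module.finrank ℂ (LinearMap.ker H₁.mulVecLin) := by
        apply Module.finrank_pos_iff_exists_ne_zero.mpr
        exact ⟨⟨v, by simpa [Matrix.mulVecLin] using hmv⟩, by simpa using hv⟩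
      omega
    -- lower bound: columns 0 and 1 are linearly independent
    have hlb : 2 ≤ H₁.rank := by
      rw [Matrix.rank_eq_finrank_span_cols]
      have hli : LinearIndependent ℂ ![(H₁.transpose 0), (H₁.transpose 1)] := by
        rw [LinearIndependent.pair_iff]
        intro s t hst
        have h0 := congrFun hst 0
        have h1 := congrFun hst 1
        simp [Matrix.transpose_apply, h₁.2.1 0, h₁.2.1 1] at h0 h1
        exact ⟨h1.resolve_right fun h => hne.1 (star_eq_zero.mp ((h₁.1.apply 1 0).trans h)),
          h0.resolve_right hne.1⟩
      have := finrank_span_eq_card hli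
      have hle : Submodule.span ℂ (Set.range ![(H₁.transpose 0), (H₁.transpose 1)]) ≤
          Submodule.span ℂ (Set.range H₁.transpose) := by
        apply Submodule.span_mono
        rintro x ⟨i, rfl⟩
        fin_cases i <;> exact ⟨_, rfl⟩
      calc 2 = Module.finrank ℂ (Submodule.span ℂ (Set.range ![(H₁.transpose 0), (H₁.transpose 1)])) := by
              simp [this]
        _ ≤ _ := Submodule.finrank_mono hle
    omega
  · -- rank H₂ = 3
    have h3 := Matrix.rank_of_isUnit H₂ ((Matrix.isUnit_iff_isUnit_det _).mpr
      (isUnit_iff_ne_zero.mpr hdet2))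
    rw [h3, Fintype.card_fin]
end
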